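/- arXiv:2603.09211 — 3 statements merged into one kernel-verified Lean document; each statement's English description precedes it below -/
import Mathlib

section
/- Fix d ≥ 1 and A ∈ 𝓡. Suppose Assumption 1.1 holds and Assumption 3.1 holds (in particular r > 0 and F ∈ (𝒞∩𝒫_𝒟)_A). Then lim_{M→∞} limsup_{x→∞} [ Σ_{i=M+1}^∞ P(X^(i) e^{−r τ_i} ∈ x·A) ] / P(X^(1) e^{−r τ_1} ∈ x·A) = 0. -/
open MeasureTheory ProbabilityTheory Filter Topology Set
open scoped Pointwise ENNReal NNReal

noncomputable section

/-- The family `𝓡` of open increasing subsets of `ℝ^d` with convex complement,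
whose closure avoids the origin. -/
def InRfam (d : ℕ) (A : Set (Fin d → ℝ)) : Prop :=
  IsOpen A ∧ (∀ x ∈ A, ∀ z : Fin d → ℝ, (∀ i, 0 ≤ z i) → x + z ∈ A) ∧
    Convex ℝ Aᶜ ∧ (0 : Fin d → ℝ) ∉ closure A

/-- The functional `z ↦ z_A = sup {u > 0 : z ∈ u • A}` (real `sSup`, so `sup ∅ = 0`). -/
def projA {d : ℕ} (A : Set (Fin d → ℝ)) (z : Fin d → ℝ) : ℝ :=
  sSup {u : ℝ | 0 < u ∧ z ∈ u • A}

/-- The tail `Ḡ_A(x) = P(Z_A > x)` of the one-dimensional distribution `G_A`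
associated with a distribution `G` on `ℝ^d` and a set `A ∈ 𝓡`. -/
def tailA {d : ℕ} (A : Set (Fin d → ℝ)) (G : Measure (Fin d → ℝ)) (x : ℝ) : ℝ :=
  (G {z | x < projA A z}).toReal

/-- Product of two measures (via `bind`, no instance assumptions). -/
def mprod {α β : Type*} [MeasurableSpace α] [MeasurableSpace β]
    (μ : Measure α) (ν : Measure β) : Measure (α × β) :=
  μ.bind fun a => ν.map (Prod.mk a)

/-- Tail at `x` of `Z¹_A + Z²_A` for independent `Z¹ ∼ G₁`, `Z² ∼ G₂`. -/
def tail2A {d : ℕ} (A : Set (Fin d → ℝ)) (G₁ G₂ : Measure (Fin d → ℝ)) (x : ℝ) : ℝ :=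
  ((mprod G₁ G₂) {p | x < projA A p.1 + projA A p.2}).toReal

/-- `G ∈ 𝒮_A`: the distribution `G_A` has everywhere positive tail and is
subexponential, i.e. `P(Z¹_A + Z²_A > x) ∼ 2 Ḡ_A(x)` for independent copies. -/
def SubexpA {d : ℕ} (A : Set (Fin d → ℝ)) (G : Measure (Fin d → ℝ)) : Prop :=
  (∀ x : ℝ, 0 < tailA A G x) ∧
    Tendsto (fun x => tail2A A G G x / tailA A G x) atTop (𝓝 2)

/-- Convolution: the law of the sum of independent draws from `μ` and `ν`. -/
def mconv {d : ℕ} (μ ν : Measure (Fin d → ℝ)) : Measure (Fin d → ℝ) :=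
  (mprod μ ν).map fun p => p.1 + p.2

/-- Regression dependence with explicit constants `x₀, K`, in integrated form:
for every index `i`, finite nonempty `J` not containing `i`, level `xi > x₀` and
measurable set `S` of conditioning values all `> x₀`,
`P(Z_i > xi, (Z_j)_{j∈J} ∈ S) ≤ K · Ḡ_i(xi) · P((Z_j)_{j∈J} ∈ S)`. -/
def RDwith {Ω : Type*} [MeasurableSpace Ω] (P : Measure Ω) (x₀ K : ℝ)
    {ι : Type*} (Z : ι → Ω → ℝ) : Prop :=
  ∀ i : ι, ∀ J : Finset ι, J.Nonempty → i ∉ J → ∀ xi : ℝ, x₀ < xi →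
    ∀ S : Set (J → ℝ), MeasurableSet S → (∀ v ∈ S, ∀ j : J, x₀ < v j) →
      (P {ω | xi < Z i ω ∧ (fun j : J => Z j.1 ω) ∈ S}).toReal ≤
        K * (P {ω | xi < Z i ω}).toReal * (P {ω | (fun j : J => Z j.1 ω) ∈ S}).toReal

/-- Regression dependence (`RD`). -/
def RD {Ω : Type*} [MeasurableSpace Ω] (P : Measure Ω) {ι : Type*} (Z : ι → Ω → ℝ) : Prop :=
  ∃ x₀ > (0 : ℝ), ∃ K > (0 : ℝ), RDwith P x₀ K Z

/-- `RD_A` for random vectors: the projections `Z^{(i)}_A` are `RD`. -/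
def RDA {Ω : Type*} [MeasurableSpace Ω] (P : Measure Ω) {d : ℕ} (A : Set (Fin d → ℝ))
    {ι : Type*} (Z : ι → Ω → Fin d → ℝ) : Prop :=
  RD P fun i ω => projA A (Z i ω)

/-- Quasi asymptotic independence (`QAI`). -/
def QAI {Ω : Type*} [MeasurableSpace Ω] (P : Measure Ω) {ι : Type*} (Z : ι → Ω → ℝ) : Prop :=
  ∀ i j : ι, i ≠ j →
    Tendsto (fun x : ℝ => (P {ω | x < Z i ω ∧ x < Z j ω}).toReal /
      ((P {ω | x < Z i ω}).toReal + (P {ω | x < Z j ω}).toReal)) atTop (𝓝 0)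

/-- `QAI_A` for random vectors: the projections `Z^{(i)}_A` are `QAI`. -/
def QAIA {Ω : Type*} [MeasurableSpace Ω] (P : Measure Ω) {d : ℕ} (A : Set (Fin d → ℝ))
    {ι : Type*} (Z : ι → Ω → Fin d → ℝ) : Prop :=
  QAI P fun i ω => projA A (Z i ω)

/-- The consistent variation class `𝒞` for a tail function `g`. -/
def ClassC (g : ℝ → ℝ) : Prop :=
  Tendsto (fun b : ℝ => limsup (fun x => g (b * x) / g x) atTop) (𝓝[<] (1 : ℝ)) (𝓝 1)

/-- The positively decreasing class `𝒫_𝒟` for a tail function `g`. -/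
def ClassPD (g : ℝ → ℝ) : Prop :=
  ∃ v > (1 : ℝ), limsup (fun x => g (v * x) / g x) atTop < 1

/-- Upper Matuszewska index of a tail function. -/
def Jplus (g : ℝ → ℝ) : ℝ :=
  -limUnder atTop fun v : ℝ => Real.log (liminf (fun x => g (v * x) / g x) atTop) / Real.log v

/-- Lower Matuszewska index of a tail function. -/
def Jminus (g : ℝ → ℝ) : ℝ :=
  -limUnder atTop fun v : ℝ => Real.log (limsup (fun x => g (v * x) / g x) atTop) / Real.log v

/-- `F ∈ MRV(α, μ)` with associated regularly varying tail `Vbar`: `Vbar` is the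
tail of a distribution on `ℝ`, regularly varying with index `−α`; `μ` is a nonzero
measure, finite on Borel sets at positive distance from the origin; and
`P(X ∈ x • B)/Vbar x → μ(B)` for all such `B` with `μ(∂B) = 0`. -/
def IsMRV {d : ℕ} (F : Measure (Fin d → ℝ)) (α : ℝ) (μ : Measure (Fin d → ℝ))
    (Vbar : ℝ → ℝ) : Prop :=
  (∃ V : Measure ℝ, IsProbabilityMeasure V ∧ ∀ x : ℝ, Vbar x = (V (Ioi x)).toReal) ∧
    (∀ᶠ x in atTop, 0 < Vbar x) ∧
    (∀ t : ℝ, 0 < t → Tendsto (fun x => Vbar (t * x) / Vbar x) atTop (𝓝 (t ^ (-α)))) ∧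
    μ ≠ 0 ∧
    (∀ B : Set (Fin d → ℝ), MeasurableSet B → (∃ ε > (0 : ℝ), ∀ z ∈ B, ε ≤ ‖z‖) → μ B ≠ ⊤) ∧
    (∀ B : Set (Fin d → ℝ), MeasurableSet B → (∃ ε > (0 : ℝ), ∀ z ∈ B, ε ≤ ‖z‖) →
      μ (frontier B) = 0 →
      Tendsto (fun x => (F (x • B)).toReal / Vbar x) atTop (𝓝 ((μ B).toReal)))

/-- Second factorial moment measure `α⁽²⁾` of the point process with points `τ i`:
the mean measure of the off-diagonal pairs `(τ i, τ j)`, `i ≠ j`. -/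
def secondFactorial {Ω : Type*} [MeasurableSpace Ω] (P : Measure Ω) (τ : ℕ → Ω → ℝ) :
    Measure (ℝ × ℝ) :=
  Measure.sum fun p : {p : ℕ × ℕ // p.1 ≠ p.2} =>
    P.map fun ω => (τ p.1.1 ω, τ p.1.2 ω)

/-- The product measure `ν × ν`, where `ν(B) = ∑ᵢ P(τᵢ ∈ B)` is the mean measure. -/
def nuProd {Ω : Type*} [MeasurableSpace Ω] (P : Measure Ω) (τ : ℕ → Ω → ℝ) :
    Measure (ℝ × ℝ) :=
  Measure.sum fun p : ℕ × ℕ => mprod (P.map (τ p.1)) (P.map (τ p.2))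

/-- Assumption 3.2 at horizon `T` with constant `C`:
`α⁽²⁾(B) ≤ C · (ν × ν)(B)` for every Borel `B ⊆ [0,T]²`. -/
def Assumption32 {Ω : Type*} [MeasurableSpace Ω] (P : Measure Ω) (τ : ℕ → Ω → ℝ)
    (T C : ℝ) : Prop :=
  ∀ B : Set (ℝ × ℝ), MeasurableSet B → B ⊆ Icc (0 : ℝ) T ×ˢ Icc (0 : ℝ) T →
    secondFactorial P τ B ≤ ENNReal.ofReal C * nuProd P τ B

/-- Discounted aggregate claims up to a finite time `T`. -/
def Dfin {Ω : Type*} {d : ℕ} (r : ℝ) (X : ℕ → Ω → Fin d → ℝ) (τ : ℕ → Ω → ℝ)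
    (T : ℝ) (ω : Ω) : Fin d → ℝ :=
  ∑' i : ℕ, Set.indicator {ω' | τ i ω' ≤ T} (fun ω' => Real.exp (-(r * τ i ω')) • X i ω') ω

/-- Discounted aggregate claims over the infinite time horizon. -/
def Dinf {Ω : Type*} {d : ℕ} (r : ℝ) (X : ℕ → Ω → Fin d → ℝ) (τ : ℕ → Ω → ℝ)
    (ω : Ω) : Fin d → ℝ :=
  ∑' i : ℕ, Real.exp (-(r * τ i ω)) • X i ω

/-- `J_x(T)`: the number of discounted claims entering `x • A` by time `T`. -/
def Jcount {Ω : Type*} {d : ℕ} (r : ℝ) (X : ℕ → Ω → Fin d → ℝ) (τ : ℕ → Ω → ℝ)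
    (A : Set (Fin d → ℝ)) (T x : ℝ) (ω : Ω) : ℝ≥0∞ :=
  ∑' i : ℕ,
    Set.indicator {ω' | τ i ω' ≤ T ∧ Real.exp (-(r * τ i ω')) • X i ω' ∈ x • A}
      (fun _ => (1 : ℝ≥0∞)) ω

/-- Pathwise discounted stochastic integral `∫₀ᵗ e^{−rs} B(ds)
  = e^{−rt} B(t) + r ∫₀ᵗ e^{−rs} B(s) ds`. -/
def discBM {Ω : Type*} (r : ℝ) (Bi : ℝ → Ω → ℝ) (t : ℝ) (ω : Ω) : ℝ :=
  Real.exp (-(r * t)) * Bi t ω + r * ∫ s in (0 : ℝ)..t, Real.exp (-(r * s)) * Bi s ω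

/-- The insurer's surplus process `U(t)`. -/
def surplus {Ω : Type*} {d : ℕ} (r x : ℝ) (l : Fin d → ℝ) (c : Fin d → ℝ → Ω → ℝ)
    (δv : Fin d → ℝ) (Bm : Fin d → ℝ → Ω → ℝ) (X : ℕ → Ω → Fin d → ℝ) (τ : ℕ → Ω → ℝ)
    (t : ℝ) (ω : Ω) : Fin d → ℝ :=
  fun k => x * l k + (∫ s in (0 : ℝ)..t, Real.exp (-(r * s)) * c k s ω)
    + δv k * discBM r (Bm k) t ω - Dfin r X τ t ω k

set_option linter.unusedSectionVars false
set_option linter.unusedVariables false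
set_option maxHeartbeats 1000000

namespace AuxLemS8


variable {d : ℕ} {A : Set (Fin d → ℝ)}

lemma scale_mem (hA : InRfam d A) {a : Fin d → ℝ} (ha : a ∈ A) {t : ℝ} (ht : 1 ≤ t) :
    t • a ∈ A := by
  rcases eq_or_lt_of_le ht with h | h
  · simpa [← h] using ha
  · by_contra hmem
    have h0 : (0 : Fin d → ℝ) ∈ Aᶜ := fun h0 => hA.2.2.2 (subset_closure h0)
    have ht0 : (0:ℝ) < t := lt_trans one_pos h
    have h1 : (0:ℝ) ≤ 1/t := by positivity
    have h2 : (0:ℝ) ≤ 1 - 1/t := by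
      have : 1/t ≤ 1 := by rw [div_le_one ht0]; exact ht
      linarith
    have hsum : 1/t + (1 - 1/t) = 1 := by ring
    have := hA.2.2.1 (hmem : t • a ∈ Aᶜ) h0 h1 h2 hsum
    have heq : (1/t) • (t • a) + (1 - 1/t) • (0 : Fin d → ℝ) = a := by
      rw [smul_smul, smul_zero, add_zero, one_div, inv_mul_cancel₀ ht0.ne', one_smul]
    rw [heq] at this
    exact this ha

lemma bddAbove_projset (hA : InRfam d A) (z : Fin d → ℝ) :
    BddAbove {u : ℝ | 0 < u ∧ z ∈ u • A} := by
  have h := hA.2.2.2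
  rw [Metric.mem_closure_iff] at h
  push_neg at h
  obtain ⟨ε, hε, hba⟩ := h
  refine ⟨‖z‖ / ε, ?_⟩
  rintro u ⟨hu, hz⟩
  rw [mem_smul_set_iff_inv_smul_mem₀ hu.ne'] at hz
  have h1 : ε ≤ ‖u⁻¹ • z‖ := by simpa [dist_comm, dist_zero_right] using hba _ hz
  rw [norm_smul, Real.norm_eq_abs, abs_of_pos (inv_pos.2 hu)] at h1
  rw [le_div_iff₀ hε]
  calc u * ε ≤ u * (u⁻¹ * ‖z‖) := by nlinarith
  _ = ‖z‖ := by field_simp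

lemma projA_nonneg (A : Set (Fin d → ℝ)) (z : Fin d → ℝ) : 0 ≤ projA A z :=
  Real.sSup_nonneg fun _ hx => hx.1.le

lemma mem_smul_iff (hA : InRfam d A) {x : ℝ} (hx : 0 < x) (z : Fin d → ℝ) :
    z ∈ x • A ↔ x < projA A z := by
  constructor
  · intro hz
    rw [mem_smul_set_iff_inv_smul_mem₀ hx.ne'] at hz
    have hcont : ContinuousAt (fun u : ℝ => u⁻¹ • z) x :=
      ((continuousAt_inv₀ hx.ne').smul continuousAt_const)
    have hev : ∀ᶠ u in 𝓝 x, u⁻¹ • z ∈ A := hcont.eventually_mem (hA.1.mem_nhds hz)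
    have hev' : ∀ᶠ u in 𝓝[>] x, u⁻¹ • z ∈ A := nhdsWithin_le_nhds hev
    obtain ⟨u, hu1, hu2⟩ := (hev'.and (eventually_mem_nhdsWithin)).exists
    have hux : x < u := hu2
    have hu0 : 0 < u := lt_trans hx hux
    have : u ∈ {u : ℝ | 0 < u ∧ z ∈ u • A} :=
      ⟨hu0, (mem_smul_set_iff_inv_smul_mem₀ hu0.ne' _ _).2 hu1⟩
    exact lt_of_lt_of_le hux (le_csSup (bddAbove_projset hA z) this)
  · intro hz
    have hne : {u : ℝ | 0 < u ∧ z ∈ u • A}.Nonempty := by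
      by_contra hemp
      rw [not_nonempty_iff_eq_empty] at hemp
      rw [projA, hemp, Real.sSup_empty] at hz
      exact absurd hz (not_lt.2 hx.le)
    obtain ⟨u, ⟨hu0, huA⟩, hxu⟩ := exists_lt_of_lt_csSup hne hz
    rw [mem_smul_set_iff_inv_smul_mem₀ hu0.ne'] at huA
    rw [mem_smul_set_iff_inv_smul_mem₀ hx.ne']
    have : x⁻¹ • z = (x⁻¹ * u) • (u⁻¹ • z) := by
      rw [smul_smul, mul_assoc, mul_inv_cancel₀ hu0.ne', mul_one]
    rw [this]
    exact scale_mem hA huA ((one_le_inv_mul₀ hx).2 hxu.le)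

lemma smul_anti (hA : InRfam d A) {u v : ℝ} (hu : 0 < u) (huv : u ≤ v) :
    v • A ⊆ u • A := by
  intro z hz
  have hv : 0 < v := lt_of_lt_of_le hu huv
  rw [mem_smul_set_iff_inv_smul_mem₀ hv.ne'] at hz
  rw [mem_smul_set_iff_inv_smul_mem₀ hu.ne']
  have : u⁻¹ • z = (u⁻¹ * v) • (v⁻¹ • z) := by
    rw [smul_smul, mul_assoc, mul_inv_cancel₀ hv.ne', mul_one]
  rw [this]
  exact scale_mem hA hz ((one_le_inv_mul₀ hu).2 huv)

lemma measurable_projA (hA : InRfam d A) : Measurable (projA A) := by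
  apply measurable_of_Ioi
  intro t
  rcases lt_trichotomy t 0 with ht | ht | ht
  · have : projA A ⁻¹' Ioi t = univ := by
      ext z; simp only [mem_preimage, mem_Ioi, mem_univ, iff_true]
      exact lt_of_lt_of_le ht (projA_nonneg A z)
    rw [this]; exact MeasurableSet.univ
  · subst ht
    have : projA A ⁻¹' Ioi 0 = ⋃ n : ℕ, ((1 / ((n:ℝ) + 1)) • A) := by
      ext z
      simp only [mem_preimage, mem_Ioi, mem_iUnion]
      constructor
      · intro hz
        have hne : {u : ℝ | 0 < u ∧ z ∈ u • A}.Nonempty := by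
          by_contra hemp
          rw [not_nonempty_iff_eq_empty] at hemp
          rw [projA, hemp, Real.sSup_empty] at hz
          exact lt_irrefl 0 hz
        obtain ⟨u, hu0, huA⟩ := hne
        obtain ⟨n, hn⟩ := exists_nat_one_div_lt hu0
        exact ⟨n, smul_anti hA (by positivity) hn.le huA⟩
      · rintro ⟨n, hn⟩
        have h1 : (0:ℝ) < 1 / ((n:ℝ) + 1) := by positivity
        exact lt_trans h1 ((mem_smul_iff hA h1 z).1 hn)
    rw [this]
    exact MeasurableSet.iUnion fun n => ((hA.1.smul₀ (by positivity)).measurableSet)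
  · have : projA A ⁻¹' Ioi t = t • A := by
      ext z
      simp only [mem_preimage, mem_Ioi]
      exact (mem_smul_iff hA ht z).symm
    rw [this]
    exact (hA.1.smul₀ ht.ne').measurableSet

-- analysis part
namespace Ana
variable {g : ℝ → ℝ} (hanti : Antitone g) (hpos : ∀ x, 0 < g x)

/-- limsup of the ratio. -/
def psi (g : ℝ → ℝ) (v : ℝ) : ℝ := limsup (fun x => g (v * x) / g x) atTop

section basic
include hanti hpos

lemma ratio_ev_le_one {v : ℝ} (hv : 1 ≤ v) :
    ∀ᶠ x in atTop, g (v * x) / g x ≤ 1 := by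
  filter_upwards [eventually_ge_atTop (0:ℝ)] with x hx
  exact div_le_one_of_le₀ (hanti (le_mul_of_one_le_left hx hv)) (hpos x).le

lemma ratio_bddU {v : ℝ} (hv : 1 ≤ v) :
    IsBoundedUnder (· ≤ ·) atTop (fun x => g (v * x) / g x) :=
  ⟨1, eventually_map.2 (ratio_ev_le_one hanti hpos hv)⟩

lemma ratio_bddL (v : ℝ) :
    IsBoundedUnder (· ≥ ·) atTop (fun x => g (v * x) / g x) :=
  ⟨0, eventually_map.2 (Eventually.of_forall fun _ => div_nonneg (hpos _).le (hpos _).le)⟩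

lemma ratio_cobdd (v : ℝ) :
    IsCoboundedUnder (· ≤ ·) atTop (fun x => g (v * x) / g x) :=
  (ratio_bddL hanti hpos v).isCoboundedUnder_le

lemma psi_le_one {v : ℝ} (hv : 1 ≤ v) : psi g v ≤ 1 :=
  limsup_le_of_le (ratio_cobdd hanti hpos v) (ratio_ev_le_one hanti hpos hv)

lemma psi_nonneg {v : ℝ} (hv : 1 ≤ v) : 0 ≤ psi g v :=
  le_limsup_of_frequently_le
    (Eventually.frequently (Eventually.of_forall fun _ => div_nonneg (hpos _).le (hpos _).le))
    (ratio_bddU hanti hpos hv)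

lemma psi_anti {u v : ℝ} (hu : 1 ≤ u) (huv : u ≤ v) : psi g v ≤ psi g u := by
  refine limsup_le_limsup ?_ (ratio_cobdd hanti hpos v) (ratio_bddU hanti hpos hu)
  filter_upwards [eventually_ge_atTop (0:ℝ)] with x hx
  have h := hanti (mul_le_mul_of_nonneg_right huv hx)
  exact div_le_div_of_nonneg_right h (hpos x).le

lemma eventually_ratio_lt {v a : ℝ} (hv : 1 ≤ v) (h : psi g v < a) :
    ∀ᶠ x in atTop, g (v * x) < a * g x := by
  have := eventually_lt_of_limsup_lt h (ratio_bddU hanti hpos hv)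
  filter_upwards [this] with x hx
  exact (div_lt_iff₀ (hpos x)).1 hx

lemma psi_submul {u v : ℝ} (hu : 1 ≤ u) (hv : 1 ≤ v) :
    psi g (u * v) ≤ psi g u * psi g v := by
  have key : ∀ ε : ℝ, 0 < ε → psi g (u * v) ≤ (psi g u + ε) * (psi g v + ε) := by
    intro ε hε
    have h1 : ∀ᶠ y in atTop, g (u * y) < (psi g u + ε) * g y :=
      eventually_ratio_lt hanti hpos hu (lt_add_of_pos_right _ hε)
    have h2 : ∀ᶠ x in atTop, g (v * x) < (psi g v + ε) * g x :=
      eventually_ratio_lt hanti hpos hv (lt_add_of_pos_right _ hε)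
    have hvx : Tendsto (fun x : ℝ => v * x) atTop atTop :=
      Tendsto.const_mul_atTop (lt_of_lt_of_le one_pos hv) tendsto_id
    have h1' : ∀ᶠ x in atTop, g (u * (v * x)) < (psi g u + ε) * g (v * x) := hvx.eventually h1
    refine limsup_le_of_le (ratio_cobdd hanti hpos (u * v)) ?_
    filter_upwards [h1', h2] with x hx1 hx2
    have hgx := hpos x
    have hgvx := hpos (v * x)
    have : g (u * v * x) / g x = (g (u * (v * x)) / g (v * x)) * (g (v * x) / g x) := by
      rw [div_mul_div_comm, mul_assoc]
      rw [div_eq_div_iff (by positivity) (by positivity)]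
      ring
    rw [this]
    have e1 : g (u * (v * x)) / g (v * x) ≤ psi g u + ε := (div_le_iff₀ hgvx).2 hx1.le
    have e2 : g (v * x) / g x ≤ psi g v + ε := (div_le_iff₀ hgx).2 hx2.le
    exact mul_le_mul e1 e2 (div_nonneg hgvx.le hgx.le)
      (le_trans (psi_nonneg hanti hpos hu) (le_add_of_nonneg_right hε.le))
  have hcont : Tendsto (fun δ : ℝ => (psi g u + δ) * (psi g v + δ)) (𝓝[>] 0)
      (𝓝 (psi g u * psi g v)) := by
    have : Tendsto (fun δ : ℝ => (psi g u + δ) * (psi g v + δ)) (𝓝 0)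
        (𝓝 ((psi g u + 0) * (psi g v + 0))) := by
      exact ((tendsto_const_nhds.add tendsto_id).mul (tendsto_const_nhds.add tendsto_id))
    simpa using this.mono_left nhdsWithin_le_nhds
  have hev : ∀ᶠ δ in 𝓝[>] (0:ℝ), psi g (u * v) ≤ (psi g u + δ) * (psi g v + δ) := by
    filter_upwards [self_mem_nhdsWithin] with δ hδ
    exact key δ hδ
  exact ge_of_tendsto hcont hev
lemma psi_pow {t : ℝ} (ht : 1 ≤ t) : ∀ n : ℕ, psi g (t ^ n) ≤ (psi g t) ^ n := by
  intro n
  induction n with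
  | zero => simpa using psi_le_one hanti hpos le_rfl
  | succ n ih =>
    have h1 : psi g (t ^ (n+1)) ≤ psi g (t ^ n) * psi g t := by
      rw [pow_succ]
      exact psi_submul hanti hpos (one_le_pow₀ ht) ht
    calc psi g (t ^ (n+1)) ≤ psi g (t ^ n) * psi g t := h1
      _ ≤ (psi g t) ^ n * psi g t :=
        mul_le_mul_of_nonneg_right ih (psi_nonneg hanti hpos ht)
      _ = (psi g t) ^ (n+1) := (pow_succ _ _).symm

/-- Potter-type bound from a single good scale. -/
lemma potter {q : ℝ} (hq : 0 < q) (h : ∃ v, 1 < v ∧ psi g v < v ^ (-q)) :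
    ∃ x₀ C : ℝ, 1 ≤ x₀ ∧ 0 < C ∧ ∀ x ≥ x₀, ∀ y, 1 ≤ y →
      g (x * y) ≤ C * y ^ (-q) * g x := by
  obtain ⟨v, hv1, hψ⟩ := h
  have hv0 : (0:ℝ) < v := lt_trans one_pos hv1
  obtain ⟨x₀', hx₀'⟩ := eventually_atTop.1 (eventually_ratio_lt hanti hpos hv1.le hψ)
  set x₀ := max x₀' 1 with hx₀def
  have hx₀1 : (1:ℝ) ≤ x₀ := le_max_right _ _
  have step : ∀ x ≥ x₀, g (v * x) ≤ v ^ (-q) * g x := fun x hx =>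
    (hx₀' x (le_trans (le_max_left _ _) hx)).le
  have iter : ∀ n : ℕ, ∀ x ≥ x₀, g (v ^ n * x) ≤ (v ^ (-q)) ^ n * g x := by
    intro n
    induction n with
    | zero => intro x _; simp
    | succ n ih =>
      intro x hx
      have hvx : v * x ≥ x₀ := le_trans hx (le_mul_of_one_le_left
        (le_trans zero_le_one (le_trans hx₀1 hx)) hv1.le)
      have h1 : g (v ^ (n+1) * x) = g (v ^ n * (v * x)) := by ring_nf
      rw [h1]
      calc g (v ^ n * (v * x)) ≤ (v ^ (-q)) ^ n * g (v * x) := ih _ hvx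
        _ ≤ (v ^ (-q)) ^ n * (v ^ (-q) * g x) :=
          mul_le_mul_of_nonneg_left (step x hx) (pow_nonneg (Real.rpow_nonneg hv0.le _) n)
        _ = (v ^ (-q)) ^ (n+1) * g x := by ring
  refine ⟨x₀, v ^ q, hx₀1, Real.rpow_pos_of_pos hv0 q, fun x hx y hy => ?_⟩
  have hx0 : (0:ℝ) < x := lt_of_lt_of_le one_pos hx₀1 |>.trans_le hx
  set n := ⌊Real.log y / Real.log v⌋₊ with hn
  have hlogv : 0 < Real.log v := Real.log_pos hv1
  have hlogy : 0 ≤ Real.log y := Real.log_nonneg hy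
  have hy0 : (0:ℝ) < y := lt_of_lt_of_le one_pos hy
  have hvn : v ^ n ≤ y := by
    have h1 : (n:ℝ) * Real.log v ≤ Real.log y := by
      have := Nat.floor_le (a := Real.log y / Real.log v) (by positivity)
      calc (n:ℝ) * Real.log v ≤ (Real.log y / Real.log v) * Real.log v :=
        mul_le_mul_of_nonneg_right this hlogv.le
        _ = Real.log y := by field_simp
    calc v ^ n = Real.exp ((n:ℝ) * Real.log v) := by
          rw [← Real.log_pow, Real.exp_log (pow_pos hv0 n)]
      _ ≤ Real.exp (Real.log y) := Real.exp_le_exp.2 h1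
      _ = y := Real.exp_log hy0
  have hyn : y ≤ v ^ (n+1) := by
    have h1 : Real.log y < ((n:ℝ) + 1) * Real.log v := by
      have := Nat.lt_floor_add_one (Real.log y / Real.log v)
      calc Real.log y = (Real.log y / Real.log v) * Real.log v := by field_simp
        _ < ((n:ℝ) + 1) * Real.log v := mul_lt_mul_of_pos_right (by exact_mod_cast this) hlogv
    have : y < v ^ (n+1) := by
      calc y = Real.exp (Real.log y) := (Real.exp_log hy0).symm
        _ < Real.exp (((n:ℝ)+1) * Real.log v) := Real.exp_lt_exp.2 h1
        _ = v ^ (n+1) := by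
            rw [show ((n:ℝ)+1) = ((n+1 : ℕ):ℝ) by push_cast; ring, ← Real.log_pow,
              Real.exp_log (pow_pos hv0 _)]
    exact this.le
  have h1 : g (x * y) ≤ (v ^ (-q)) ^ n * g x := by
    have : v ^ n * x ≤ x * y := by
      rw [mul_comm (v ^ n) x]
      exact mul_le_mul_of_nonneg_left hvn hx0.le
    exact le_trans (hanti this) (iter n x hx)
  have h2 : (v ^ (-q)) ^ n ≤ v ^ q * y ^ (-q) := by
    have e1 : ((v:ℝ) ^ (-q)) ^ n = v ^ (-q * (n:ℝ)) := by
      rw [Real.rpow_mul hv0.le, Real.rpow_natCast]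
    have e2 : (v ^ (n+1) : ℝ) ^ (-q) = v ^ (-q * ((n:ℝ)+1)) := by
      rw [← Real.rpow_natCast v (n+1), ← Real.rpow_mul hv0.le]
      push_cast; ring_nf
    have e3 : (v ^ (n+1) : ℝ) ^ (-q) ≤ y ^ (-q) := by
      rw [Real.rpow_neg (pow_pos hv0 _).le, Real.rpow_neg hy0.le]
      have : y ^ q ≤ (v ^ (n+1) : ℝ) ^ q := Real.rpow_le_rpow hy0.le hyn hq.le
      exact inv_anti₀ (Real.rpow_pos_of_pos hy0 q) this
    calc ((v:ℝ) ^ (-q)) ^ n = v ^ q * v ^ (-q * ((n:ℝ)+1)) := by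
          rw [e1, ← Real.rpow_add hv0]; ring_nf
      _ = v ^ q * (v ^ (n+1) : ℝ) ^ (-q) := by rw [e2]
      _ ≤ v ^ q * y ^ (-q) :=
          mul_le_mul_of_nonneg_left e3 (Real.rpow_pos_of_pos hv0 q).le
  calc g (x * y) ≤ (v ^ (-q)) ^ n * g x := h1
    _ ≤ (v ^ q * y ^ (-q)) * g x := mul_le_mul_of_nonneg_right h2 (hpos x).le

/-- From `q < Jminus g`, produce a good scale. -/
lemma exists_scale {q : ℝ} (hq : 0 < q) (hJ : q < Jminus g) :
    ∃ v, 1 < v ∧ psi g v < v ^ (-q) := by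
  by_contra hcon
  push_neg at hcon
  set φ : ℝ → ℝ := fun v => Real.log (psi g v) / Real.log v with hφ
  have hub : ∀ v, 1 < v → φ v ≤ 0 := fun v hv =>
    div_nonpos_of_nonpos_of_nonneg
      (Real.log_nonpos (psi_nonneg hanti hpos hv.le) (psi_le_one hanti hpos hv.le))
      (Real.log_nonneg hv.le)
  have hlb : ∀ v, 1 < v → -q ≤ φ v := by
    intro v hv
    have hv0 : (0:ℝ) < v := lt_trans one_pos hv
    have h0 : (0:ℝ) < v ^ (-q) := Real.rpow_pos_of_pos hv0 _
    have h1 : Real.log (v ^ (-q)) ≤ Real.log (psi g v) := Real.log_le_log h0 (hcon v hv)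
    rw [Real.log_rpow hv0] at h1
    rw [hφ]
    rw [le_div_iff₀ (Real.log_pos hv)]
    simpa using h1
  have hbddU : IsBoundedUnder (· ≤ ·) atTop φ :=
    ⟨0, eventually_map.2 (by filter_upwards [eventually_gt_atTop (1:ℝ)] with v hv
                             exact hub v hv)⟩
  have hbddL : IsBoundedUnder (· ≥ ·) atTop φ :=
    ⟨-q, eventually_map.2 (by filter_upwards [eventually_gt_atTop (1:ℝ)] with v hv
                              exact hlb v hv)⟩
  have key : ∀ t, 1 < t → limsup φ atTop ≤ φ t := by
    intro t ht
    refine le_of_forall_pos_le_add fun ε hε => ?_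
    have hlogt : 0 < Real.log t := Real.log_pos ht
    have hψt_nonpos : Real.log (psi g t) ≤ 0 :=
      Real.log_nonpos (psi_nonneg hanti hpos ht.le) (psi_le_one hanti hpos ht.le)
    have hlim0 : Tendsto (fun v : ℝ => (-Real.log (psi g t)) / Real.log v) atTop (𝓝 0) :=
      Tendsto.div_atTop tendsto_const_nhds Real.tendsto_log_atTop
    have hev0 : ∀ᶠ v in atTop, (-Real.log (psi g t)) / Real.log v ≤ ε := by
      filter_upwards [hlim0.eventually (eventually_lt_nhds hε)] with v hv using hv.le
    have hev1 : ∀ᶠ v in atTop, φ v ≤ φ t + (-Real.log (psi g t)) / Real.log v := by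
      filter_upwards [eventually_ge_atTop t, eventually_gt_atTop (1:ℝ)] with v hvt hv1
      have hv0 : (0:ℝ) < v := lt_trans one_pos hv1
      have hlogv : 0 < Real.log v := Real.log_pos hv1
      set n := ⌊Real.log v / Real.log t⌋₊ with hn
      have htn : t ^ n ≤ v := by
        have h1 : (n:ℝ) * Real.log t ≤ Real.log v := by
          have := Nat.floor_le (a := Real.log v / Real.log t) (by positivity)
          calc (n:ℝ) * Real.log t ≤ (Real.log v / Real.log t) * Real.log t :=
                mul_le_mul_of_nonneg_right this hlogt.le
            _ = Real.log v := by field_simp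
        calc t ^ n = Real.exp ((n:ℝ) * Real.log t) := by
              rw [← Real.log_pow, Real.exp_log (pow_pos (lt_trans one_pos ht) n)]
          _ ≤ Real.exp (Real.log v) := Real.exp_le_exp.2 h1
          _ = v := Real.exp_log hv0
      have hψle : psi g v ≤ psi g (t ^ n) :=
        psi_anti hanti hpos (one_le_pow₀ ht.le) htn
      have hψvpos : 0 < psi g v :=
        lt_of_lt_of_le (Real.rpow_pos_of_pos hv0 _) (hcon v hv1)
      have hlog1 : Real.log (psi g v) ≤ (n:ℝ) * Real.log (psi g t) := by
        have h2 : psi g v ≤ psi g t ^ n := hψle.trans (psi_pow hanti hpos ht.le n)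
        have := Real.log_le_log hψvpos h2
        rwa [Real.log_pow] at this
      have hn_ge : Real.log v / Real.log t - 1 ≤ (n:ℝ) := (Nat.sub_one_lt_floor _).le
      have h2 : (n:ℝ) * Real.log (psi g t) ≤
          (Real.log v / Real.log t - 1) * Real.log (psi g t) :=
        mul_le_mul_of_nonpos_right hn_ge hψt_nonpos
      have h3 : φ v ≤ ((Real.log v / Real.log t - 1) * Real.log (psi g t)) / Real.log v := by
        rw [hφ]
        exact div_le_div_of_nonneg_right (hlog1.trans h2) hlogv.le
      have h4 : ((Real.log v / Real.log t - 1) * Real.log (psi g t)) / Real.log v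
          = φ t + (-Real.log (psi g t)) / Real.log v := by
        rw [hφ]
        field_simp
        ring
      rw [h4] at h3
      exact h3
    refine limsup_le_of_le hbddL.isCoboundedUnder_le ?_
    filter_upwards [hev0, hev1] with v h0 h1
    linarith
  have hUL : limsup φ atTop ≤ liminf φ atTop := by
    refine le_liminf_of_le hbddU.isCoboundedUnder_ge ?_
    filter_upwards [eventually_gt_atTop (1:ℝ)] with t ht
    exact key t ht
  have hLU : liminf φ atTop ≤ limsup φ atTop := liminf_le_limsup hbddU hbddL
  have heq : liminf φ atTop = limsup φ atTop := le_antisymm hLU hUL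
  have htend : Tendsto φ atTop (𝓝 (limsup φ atTop)) :=
    tendsto_of_liminf_eq_limsup heq rfl hbddU hbddL
  have hlimU : limUnder atTop φ = limsup φ atTop := htend.limUnder_eq
  have hJeq : Jminus g = -limsup φ atTop := by
    rw [Jminus, ← hlimU]; rfl
  have hlow : -q ≤ limsup φ atTop := by
    refine le_limsup_of_frequently_le ?_ hbddU
    refine Eventually.frequently ?_
    filter_upwards [eventually_gt_atTop (1:ℝ)] with v hv
    exact hlb v hv
  rw [hJeq] at hJ
  linarith

/-- Lower bound at scale `c ≥ 1` from class `𝒞`. -/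
lemma classC_lower (hC : ClassC g) {c : ℝ} (hc : 1 ≤ c) :
    ∃ κ x₂ : ℝ, 0 < κ ∧ 1 ≤ x₂ ∧ ∀ x ≥ x₂, κ * g x ≤ g (c * x) := by
  have hev1 : ∀ᶠ b in 𝓝[<] (1:ℝ),
      limsup (fun x => g (b * x) / g x) atTop ∈ Ioo (1/2 : ℝ) 2 :=
    hC.eventually (Ioo_mem_nhds (by norm_num) (by norm_num))
  have hev2 : ∀ᶠ b in 𝓝[<] (1:ℝ), b ∈ Ioo (0:ℝ) 1 :=
    eventually_of_mem (Ioo_mem_nhdsLT_of_mem (by constructor <;> norm_num)) (fun _ hx => hx)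
  obtain ⟨b, hb, hb01⟩ := (hev1.and hev2).exists
  obtain ⟨hb0, hb1⟩ := hb01
  have hbne : {a : ℝ | ∀ᶠ x in atTop, g (b * x) / g x ≤ a}.Nonempty := by
    by_contra h
    rw [not_nonempty_iff_eq_empty] at h
    have h2 := hb.1
    rw [limsup_eq, h, Real.sInf_empty] at h2
    linarith
  obtain ⟨a, ha⟩ := hbne
  have hbdd : IsBoundedUnder (· ≤ ·) atTop (fun x => g (b * x) / g x) :=
    ⟨a, eventually_map.2 ha⟩
  have hev3 : ∀ᶠ x in atTop, g (b * x) / g x < 2 := eventually_lt_of_limsup_lt hb.2 hbdd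
  obtain ⟨x₂', hx₂'⟩ := eventually_atTop.1 hev3
  set x₂ := max x₂' 1 with hx₂def
  have hx₂1 : (1:ℝ) ≤ x₂ := le_max_right _ _
  have step : ∀ x ≥ x₂, g x ≤ 2 * g (b⁻¹ * x) := by
    intro x hx
    have hbx : b * (b⁻¹ * x) = x := by field_simp
    have hx0 : (0:ℝ) < x := lt_of_lt_of_le one_pos (le_trans hx₂1 hx)
    have hbinv : (1:ℝ) ≤ b⁻¹ := (one_le_inv₀ hb0).2 hb1.le
    have hge : b⁻¹ * x ≥ x₂' := by
      calc x₂' ≤ x₂ := le_max_left _ _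
        _ ≤ x := hx
        _ ≤ b⁻¹ * x := le_mul_of_one_le_left hx0.le hbinv
    have := hx₂' _ hge
    rw [hbx] at this
    exact ((div_lt_iff₀ (hpos _)).1 this).le
  have hbinv1 : (1:ℝ) < b⁻¹ := (one_lt_inv₀ hb0).2 hb1
  have iter : ∀ n : ℕ, ∀ x ≥ x₂, g x ≤ 2 ^ n * g (b⁻¹ ^ n * x) := by
    intro n
    induction n with
    | zero => intro x _; simp
    | succ n ih =>
      intro x hx
      have hx0 : (0:ℝ) < x := lt_of_lt_of_le one_pos (le_trans hx₂1 hx)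
      have hpow1 : (1:ℝ) ≤ b⁻¹ ^ n := one_le_pow₀ hbinv1.le
      have hge : b⁻¹ ^ n * x ≥ x₂ := le_trans hx (le_mul_of_one_le_left hx0.le hpow1)
      calc g x ≤ 2 ^ n * g (b⁻¹ ^ n * x) := ih x hx
        _ ≤ 2 ^ n * (2 * g (b⁻¹ * (b⁻¹ ^ n * x))) :=
            mul_le_mul_of_nonneg_left (step _ hge) (by positivity)
        _ = 2 ^ (n+1) * g (b⁻¹ ^ (n+1) * x) := by
            rw [show b⁻¹ ^ (n+1) * x = b⁻¹ * (b⁻¹ ^ n * x) by ring]; ring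
  obtain ⟨n, hnc⟩ := pow_unbounded_of_one_lt c hbinv1
  refine ⟨(2 ^ n)⁻¹, x₂, by positivity, hx₂1, fun x hx => ?_⟩
  have hx0 : (0:ℝ) < x := lt_of_lt_of_le one_pos (le_trans hx₂1 hx)
  have h1 : g (b⁻¹ ^ n * x) ≤ g (c * x) := by
    apply hanti
    exact mul_le_mul_of_nonneg_right hnc.le hx0.le
  have h2 := iter n x hx
  have h3 : g x ≤ 2 ^ n * g (c * x) :=
    h2.trans (mul_le_mul_of_nonneg_left h1 (by positivity))
  calc (2 ^ n : ℝ)⁻¹ * g x ≤ (2 ^ n : ℝ)⁻¹ * (2 ^ n * g (c * x)) :=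
        mul_le_mul_of_nonneg_left h3 (by positivity)
    _ = g (c * x) := by field_simp

end basic
end Ana
end AuxLemS8

/-- Lemma 3.4: under Assumptions 1.1 and 3.1, the tail of the series is uniformly
negligible: `lim_{M→∞} limsup_{x→∞} ∑_{i>M} P(X⁽ⁱ⁾ e^{−r τᵢ} ∈ x A)
  / P(X⁽¹⁾ e^{−r τ₁} ∈ x A) = 0` (with `0`-based indexing: claim `1` is index `0`). -/
theorem statement8
    {Ω : Type*} [MeasurableSpace Ω] (P : Measure Ω) [IsProbabilityMeasure P]
    {d : ℕ} (hd : 1 ≤ d) {A : Set (Fin d → ℝ)} (hA : InRfam d A)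
    {r : ℝ} (hr : 0 < r)
    (F : Measure (Fin d → ℝ)) [IsProbabilityMeasure F]
    (X : ℕ → Ω → Fin d → ℝ) (τ : ℕ → Ω → ℝ)
    (hXmeas : ∀ i, Measurable (X i)) (hτmeas : ∀ i, Measurable (τ i))
    (hXnn : ∀ i ω k, 0 ≤ X i ω k)
    (hXdist : ∀ i, P.map (X i) = F)
    (hτnn : ∀ i ω, 0 ≤ τ i ω) (hτmono : ∀ i ω, τ i ω ≤ τ (i + 1) ω)
    (hindep : IndepFun (fun ω i => X i ω) (fun ω i => τ i ω) P)
    (hFpos : ∀ x : ℝ, 0 < tailA A F x)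
    (hFC : ClassC (tailA A F)) (hFPD : ClassPD (tailA A F))
    (hmom : ∃ q₁ q₂ : ℝ, 0 < q₁ ∧ q₁ < Jminus (tailA A F) ∧
      Jminus (tailA A F) ≤ Jplus (tailA A F) ∧ Jplus (tailA A F) < q₂ ∧
      Summable (fun i : ℕ =>
        (max (∫ ω, Real.exp (-(q₁ * (r * τ i ω))) ∂P)
            (∫ ω, Real.exp (-(q₂ * (r * τ i ω))) ∂P)) ^
          ((1 : ℝ) / (if Jplus (tailA A F) < 1 then 1 else q₂)))) :
    Tendsto (fun M : ℕ =>
        limsup (fun x : ℝ =>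
          (∑' i : ℕ, if M ≤ i then
              (P {ω | Real.exp (-(r * τ i ω)) • X i ω ∈ x • A}).toReal else 0) /
            (P {ω | Real.exp (-(r * τ 0 ω)) • X 0 ω ∈ x • A}).toReal) atTop)
      atTop (𝓝 0) := by
  classical
  have hganti : Antitone (tailA A F) := fun s t hst =>
    ENNReal.toReal_mono (measure_ne_top F _)
      (measure_mono (fun z hz => lt_of_le_of_lt hst hz))
  have hgpos : ∀ s, 0 < tailA A F s := hFpos
  set g : ℝ → ℝ := tailA A F with hgdef
  set G : ℝ → ℝ≥0∞ := fun s => F {z | s < projA A z} with hGdef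
  have hGne : ∀ s, G s ≠ ⊤ := fun s => measure_ne_top F _
  have hGanti : Antitone G := fun s t hst =>
    measure_mono (fun z hz => lt_of_le_of_lt hst hz)
  have hgG : ∀ s, G s = ENNReal.ofReal (g s) := fun s =>
    (ENNReal.ofReal_toReal (hGne s)).symm
  obtain ⟨q₁, q₂, hq₁pos, hq₁J, hJJ, hq₂J, hsum⟩ := hmom
  have hscale := AuxLemS8.Ana.exists_scale hganti hgpos hq₁pos hq₁J
  obtain ⟨x₀, C, hx₀1, hC0, hpotter⟩ := AuxLemS8.Ana.potter hganti hgpos hq₁pos hscale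
  set m : ℕ → ℝ := fun i => ∫ ω, Real.exp (-(q₁ * (r * τ i ω))) ∂P with hmdef
  have hq₂pos : 0 < q₂ := lt_trans (lt_trans hq₁pos hq₁J) (lt_of_le_of_lt hJJ hq₂J)
  have hexpmeas : ∀ (q : ℝ) (i : ℕ), Measurable fun ω => Real.exp (-(q * (r * τ i ω))) :=
    fun q i => (((hτmeas i).const_mul r).const_mul q).neg.exp
  have hexple : ∀ (q : ℝ), 0 < q → ∀ (i : ℕ) ω, Real.exp (-(q * (r * τ i ω))) ≤ 1 := by
    intro q hq i ω
    rw [Real.exp_le_one_iff]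
    have := hτnn i ω
    have : 0 ≤ q * (r * τ i ω) := by positivity
    linarith
  have hexppos : ∀ (q : ℝ) (i : ℕ) ω, 0 < Real.exp (-(q * (r * τ i ω))) :=
    fun q i ω => Real.exp_pos _
  have hint : ∀ (q : ℝ), 0 < q → ∀ i : ℕ,
      Integrable (fun ω => Real.exp (-(q * (r * τ i ω)))) P := by
    intro q hq i
    refine Integrable.mono' (integrable_const (1:ℝ)) (hexpmeas q i).aestronglyMeasurable ?_
    refine Eventually.of_forall fun ω => ?_
    rw [Real.norm_eq_abs, abs_of_pos (hexppos q i ω)]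
    exact hexple q hq i ω
  have hippos : ∀ (q : ℝ), 0 < q → ∀ i : ℕ,
      0 < ∫ ω, Real.exp (-(q * (r * τ i ω))) ∂P := by
    intro q hq i
    rw [integral_pos_iff_support_of_nonneg_ae
      (Eventually.of_forall fun ω => (hexppos q i ω).le) (hint q hq i)]
    have : (Function.support fun ω => Real.exp (-(q * (r * τ i ω)))) = univ := by
      ext ω; simp [Function.mem_support, (hexppos q i ω).ne']
    rw [this]
    simp
  have hiple : ∀ (q : ℝ), 0 < q → ∀ i : ℕ,
      (∫ ω, Real.exp (-(q * (r * τ i ω))) ∂P) ≤ 1 := by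
    intro q hq i
    calc (∫ ω, Real.exp (-(q * (r * τ i ω))) ∂P) ≤ ∫ _, (1:ℝ) ∂P :=
          integral_mono (hint q hq i) (integrable_const 1) (fun ω => hexple q hq i ω)
      _ = 1 := by simp
  have hmsum : Summable m := by
    set qq : ℝ := if Jplus (tailA A F) < 1 then 1 else q₂ with hqqdef
    have hqq1 : 1 ≤ qq := by
      rw [hqqdef]
      split_ifs with h
      · exact le_refl 1
      · push_neg at h
        exact le_trans h hq₂J.le
    have hqqpos : 0 < qq := lt_of_lt_of_le one_pos hqq1
    refine Summable.of_nonneg_of_le (fun i => (hippos q₁ hq₁pos i).le) (fun i => ?_) hsum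
    have hMipos : 0 < max (∫ ω, Real.exp (-(q₁ * (r * τ i ω))) ∂P)
        (∫ ω, Real.exp (-(q₂ * (r * τ i ω))) ∂P) :=
      lt_of_lt_of_le (hippos q₁ hq₁pos i) (le_max_left _ _)
    have hMile1 : max (∫ ω, Real.exp (-(q₁ * (r * τ i ω))) ∂P)
        (∫ ω, Real.exp (-(q₂ * (r * τ i ω))) ∂P) ≤ 1 :=
      max_le (hiple q₁ hq₁pos i) (hiple q₂ hq₂pos i)
    have h1 : m i ≤ max (∫ ω, Real.exp (-(q₁ * (r * τ i ω))) ∂P)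
        (∫ ω, Real.exp (-(q₂ * (r * τ i ω))) ∂P) := le_max_left _ _
    refine h1.trans ?_
    have h2 := Real.rpow_le_rpow_of_exponent_ge hMipos hMile1
      (show (1:ℝ)/qq ≤ 1 by rw [div_le_one hqqpos]; exact hqq1)
    rwa [Real.rpow_one] at h2
  have hmnn : ∀ i, 0 ≤ m i := fun i => (hippos q₁ hq₁pos i).le
  have htail : Tendsto (fun M : ℕ => ∑' i, if M ≤ i then m i else 0) atTop (𝓝 0) := by
    have hpart : Tendsto (fun M : ℕ => ∑ i ∈ Finset.range M, m i) atTop (𝓝 (∑' i, m i)) :=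
      hmsum.hasSum.tendsto_sum_nat
    have hsplit : ∀ M : ℕ, (∑' i, if M ≤ i then m i else 0)
        = (∑' i, m i) - ∑ i ∈ Finset.range M, m i := by
      intro M
      have hs1 : Summable (fun i => if M ≤ i then m i else 0) :=
        Summable.of_nonneg_of_le (fun i => by split_ifs <;> simp [hmnn])
          (fun i => by split_ifs <;> simp [hmnn]) hmsum
      have hs2 : Summable (fun i => if M ≤ i then 0 else m i) :=
        Summable.of_nonneg_of_le (fun i => by split_ifs <;> simp [hmnn])
          (fun i => by split_ifs <;> simp [hmnn]) hmsum
      have hadd : ∀ i, m i = (if M ≤ i then m i else 0) + (if M ≤ i then 0 else m i) := by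
        intro i; split_ifs <;> simp
      have h2 : (∑' i, (if M ≤ i then (0:ℝ) else m i)) = ∑ i ∈ Finset.range M, m i := by
        rw [tsum_eq_sum (s := Finset.range M)
          (by intro i hi; rw [Finset.mem_range, not_lt] at hi; simp [if_pos hi])]
        apply Finset.sum_congr rfl
        intro i hi; rw [Finset.mem_range] at hi
        rw [if_neg (not_le.2 hi)]
      have h3 : (∑' i, m i) = (∑' i, if M ≤ i then m i else 0)
          + (∑' i, if M ≤ i then 0 else m i) := by
        rw [← Summable.tsum_add hs1 hs2]
        exact tsum_congr hadd
      rw [h3, h2]; ring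
    have heq : (fun M : ℕ => ∑' i, if M ≤ i then m i else 0)
        = fun M : ℕ => (∑' i, m i) - ∑ i ∈ Finset.range M, m i := funext hsplit
    rw [heq]
    have := hpart.const_sub (∑' i, m i)
    simpa using this
  have hprojmeas := AuxLemS8.measurable_projA hA
  haveI hPMτ : ∀ i, IsProbabilityMeasure (P.map (τ i)) := fun i =>
    Measure.isProbabilityMeasure_map (hτmeas i).aemeasurable
  have hset : ∀ (i : ℕ) (x : ℝ), 0 < x →
      {ω | Real.exp (-(r * τ i ω)) • X i ω ∈ x • A} =
        {ω | x * Real.exp (r * τ i ω) < projA A (X i ω)} := by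
    intro i x hx
    ext ω
    simp only [mem_setOf_eq]
    have hc0 : 0 < Real.exp (-(r * τ i ω)) := Real.exp_pos _
    have hcinv : (Real.exp (-(r * τ i ω)))⁻¹ = Real.exp (r * τ i ω) := by
      rw [← Real.exp_neg]; ring_nf
    have h1 : x • A = Real.exp (-(r * τ i ω)) •
        (((Real.exp (-(r * τ i ω)))⁻¹ * x) • A) := by
      rw [smul_smul, ← mul_assoc, mul_inv_cancel₀ hc0.ne', one_mul]
    rw [h1, smul_mem_smul_set_iff₀ hc0.ne',
      AuxLemS8.mem_smul_iff hA (by positivity) (X i ω), hcinv, mul_comm]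
  have hrep : ∀ (i : ℕ) (x : ℝ),
      P {ω | x * Real.exp (r * τ i ω) < projA A (X i ω)} =
        ∫⁻ t, G (x * Real.exp (r * t)) ∂(P.map (τ i)) := by
    intro i x
    have hpair : Measurable fun ω => (X i ω, τ i ω) := (hXmeas i).prodMk (hτmeas i)
    have hSmeas : MeasurableSet {p : (Fin d → ℝ) × ℝ | x * Real.exp (r * p.2) < projA A p.1} :=
      measurableSet_lt (((measurable_snd.const_mul r).exp).const_mul x)
        (hprojmeas.comp measurable_fst)
    have hXτindep : IndepFun (X i) (τ i) P :=
      hindep.comp (measurable_pi_apply i) (measurable_pi_apply i)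
    have hmapeq : P.map (fun ω => (X i ω, τ i ω)) = (P.map (X i)).prod (P.map (τ i)) :=
      (indepFun_iff_map_prod_eq_prod_map_map (hXmeas i).aemeasurable
        (hτmeas i).aemeasurable).1 hXτindep
    have hev : {ω | x * Real.exp (r * τ i ω) < projA A (X i ω)} =
        (fun ω => (X i ω, τ i ω)) ⁻¹' {p | x * Real.exp (r * p.2) < projA A p.1} := rfl
    rw [hev, ← Measure.map_apply hpair hSmeas, hmapeq, hXdist i,
      Measure.prod_apply_symm hSmeas]
    rfl
  have hub : ∀ (i : ℕ) (x : ℝ), x₀ ≤ x →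
      (P {ω | x * Real.exp (r * τ i ω) < projA A (X i ω)}).toReal ≤ C * g x * m i := by
    intro i x hx
    have hx0 : 0 < x := lt_of_lt_of_le one_pos (le_trans hx₀1 hx)
    rw [hrep i x]
    have haet : ∀ᵐ t ∂(P.map (τ i)), t ∈ Ici (0:ℝ) :=
      (MeasureTheory.ae_map_iff (hτmeas i).aemeasurable measurableSet_Ici).2
        (Eventually.of_forall fun ω => mem_Ici.2 (hτnn i ω))
    have hbound : ∀ᵐ t ∂(P.map (τ i)), G (x * Real.exp (r * t)) ≤
        ENNReal.ofReal (Real.exp (-(q₁ * (r * t)))) * ENNReal.ofReal (C * g x) := by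
      filter_upwards [haet] with t ht
      have ht0 : (0:ℝ) ≤ t := ht
      have hy1 : (1:ℝ) ≤ Real.exp (r * t) := Real.one_le_exp (mul_nonneg hr.le ht0)
      have hpt := hpotter x hx (Real.exp (r * t)) hy1
      have hexp : Real.exp (r * t) ^ (-q₁) = Real.exp (-(q₁ * (r * t))) := by
        rw [Real.rpow_def_of_pos (Real.exp_pos _), Real.log_exp]
        ring_nf
      rw [hgG]
      calc ENNReal.ofReal (g (x * Real.exp (r * t)))
          ≤ ENNReal.ofReal (C * Real.exp (r * t) ^ (-q₁) * g x) :=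
            ENNReal.ofReal_le_ofReal hpt
        _ = ENNReal.ofReal (Real.exp (-(q₁ * (r * t)))) * ENNReal.ofReal (C * g x) := by
            rw [← ENNReal.ofReal_mul (Real.exp_nonneg _)]
            congr 1
            rw [hexp]; ring
    have hmeasf : Measurable fun t : ℝ => ENNReal.ofReal (Real.exp (-(q₁ * (r * t)))) :=
      (((measurable_id.const_mul r).const_mul q₁).neg.exp).ennreal_ofReal
    have hlint : ∫⁻ t, G (x * Real.exp (r * t)) ∂(P.map (τ i)) ≤
        ENNReal.ofReal (m i) * ENNReal.ofReal (C * g x) := by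
      calc ∫⁻ t, G (x * Real.exp (r * t)) ∂(P.map (τ i))
          ≤ ∫⁻ t, ENNReal.ofReal (Real.exp (-(q₁ * (r * t)))) * ENNReal.ofReal (C * g x)
              ∂(P.map (τ i)) := lintegral_mono_ae hbound
        _ = (∫⁻ t, ENNReal.ofReal (Real.exp (-(q₁ * (r * t)))) ∂(P.map (τ i)))
              * ENNReal.ofReal (C * g x) := lintegral_mul_const _ hmeasf
        _ = ENNReal.ofReal (m i) * ENNReal.ofReal (C * g x) := by
            congr 1
            rw [lintegral_map hmeasf (hτmeas i)]
            rw [← MeasureTheory.ofReal_integral_eq_lintegral_ofReal (hint q₁ hq₁pos i)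
              (Eventually.of_forall fun ω => (hexppos q₁ i ω).le)]
    refine ENNReal.toReal_le_of_le_ofReal
      (mul_nonneg (mul_nonneg hC0.le (hgpos x).le) (hmnn i)) ?_
    calc ∫⁻ t, G (x * Real.exp (r * t)) ∂(P.map (τ i))
        ≤ ENNReal.ofReal (m i) * ENNReal.ofReal (C * g x) := hlint
      _ = ENNReal.ofReal (C * g x * m i) := by
          rw [← ENNReal.ofReal_mul (hmnn i)]; congr 1; ring
  obtain ⟨T, hT⟩ : ∃ T : ℕ, P {ω | τ 0 ω ≤ (T:ℝ)} ≠ 0 := by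
    by_contra hcon
    push_neg at hcon
    have huniv : (univ : Set Ω) ⊆ ⋃ n : ℕ, {ω | τ 0 ω ≤ (n:ℝ)} := by
      intro ω _
      obtain ⟨n, hn⟩ := exists_nat_ge (τ 0 ω)
      exact mem_iUnion.2 ⟨n, hn⟩
    have h0 : P (⋃ n : ℕ, {ω | τ 0 ω ≤ (n:ℝ)}) = 0 :=
      measure_iUnion_null fun n => hcon n
    have : P univ = 0 := measure_mono_null huniv h0
    rw [measure_univ] at this
    exact one_ne_zero this
  set pT : ℝ := (P {ω | τ 0 ω ≤ (T:ℝ)}).toReal with hpTdef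
  have hpT : 0 < pT := ENNReal.toReal_pos hT (measure_ne_top P _)
  have hrT1 : (1:ℝ) ≤ Real.exp (r * T) := Real.one_le_exp (by positivity)
  obtain ⟨κ, x₂, hκ0, hx₂1, hlow⟩ := AuxLemS8.Ana.classC_lower hganti hgpos hFC hrT1
  have hlb : ∀ x, x₂ ≤ x →
      κ * pT * g x ≤ (P {ω | x * Real.exp (r * τ 0 ω) < projA A (X 0 ω)}).toReal := by
    intro x hx
    have hx0 : 0 < x := lt_of_lt_of_le one_pos (le_trans hx₂1 hx)
    have hsmeas : MeasurableSet {z | x * Real.exp (r * (T:ℝ)) < projA A z} :=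
      hprojmeas measurableSet_Ioi
    have hsub : (X 0 ⁻¹' {z | x * Real.exp (r * (T:ℝ)) < projA A z})
        ∩ (τ 0 ⁻¹' Iic (T:ℝ)) ⊆
        {ω | x * Real.exp (r * τ 0 ω) < projA A (X 0 ω)} := by
      rintro ω ⟨h1, h2⟩
      have he : Real.exp (r * τ 0 ω) ≤ Real.exp (r * (T:ℝ)) :=
        Real.exp_le_exp.2 (mul_le_mul_of_nonneg_left h2 hr.le)
      have : x * Real.exp (r * τ 0 ω) ≤ x * Real.exp (r * (T:ℝ)) :=
        mul_le_mul_of_nonneg_left he hx0.le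
      exact lt_of_le_of_lt this h1
    have hXτ0 : IndepFun (X 0) (τ 0) P :=
      hindep.comp (measurable_pi_apply 0) (measurable_pi_apply 0)
    have hinter := hXτ0.measure_inter_preimage_eq_mul
      {z | x * Real.exp (r * (T:ℝ)) < projA A z} (Iic (T:ℝ)) hsmeas measurableSet_Iic
    have hFs : P (X 0 ⁻¹' {z | x * Real.exp (r * (T:ℝ)) < projA A z})
        = F {z | x * Real.exp (r * (T:ℝ)) < projA A z} := by
      rw [← hXdist 0, Measure.map_apply (hXmeas 0) hsmeas]
    have hτset : (τ 0 ⁻¹' Iic (T:ℝ)) = {ω | τ 0 ω ≤ (T:ℝ)} := rfl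
    have hge : G (x * Real.exp (r * (T:ℝ))) * P {ω | τ 0 ω ≤ (T:ℝ)}
        ≤ P {ω | x * Real.exp (r * τ 0 ω) < projA A (X 0 ω)} := by
      show F {z | x * Real.exp (r * (T:ℝ)) < projA A z} * P {ω | τ 0 ω ≤ (T:ℝ)} ≤ _
      rw [← hFs, ← hτset, ← hinter]
      exact measure_mono hsub
    have hglow : κ * g x ≤ g (x * Real.exp (r * (T:ℝ))) := by
      have := hlow x hx
      rwa [mul_comm (Real.exp (r * (T:ℝ))) x] at this
    have hGlow : ENNReal.ofReal (κ * g x) ≤ G (x * Real.exp (r * (T:ℝ))) := by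
      rw [hgG]; exact ENNReal.ofReal_le_ofReal hglow
    have hfinal : ENNReal.ofReal (κ * g x) * P {ω | τ 0 ω ≤ (T:ℝ)}
        ≤ P {ω | x * Real.exp (r * τ 0 ω) < projA A (X 0 ω)} :=
      le_trans (mul_le_mul_left hGlow _) hge
    have hmono := ENNReal.toReal_mono (measure_ne_top P _) hfinal
    rw [ENNReal.toReal_mul, ENNReal.toReal_ofReal
      (mul_nonneg hκ0.le (hgpos x).le)] at hmono
    calc κ * pT * g x = (κ * g x) * pT := by ring
      _ ≤ _ := hmono
  -- final assembly
  set K : ℝ := C / (κ * pT) with hKdef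
  have hKpos : 0 < K := by positivity
  have hfin : ∀ M : ℕ, ∀ x : ℝ, max x₀ x₂ ≤ x →
      (∑' i : ℕ, if M ≤ i then
          (P {ω | Real.exp (-(r * τ i ω)) • X i ω ∈ x • A}).toReal else 0) /
        (P {ω | Real.exp (-(r * τ 0 ω)) • X 0 ω ∈ x • A}).toReal ≤
      K * (∑' i, if M ≤ i then m i else 0) := by
    intro M x hx
    have hx₀x : x₀ ≤ x := le_trans (le_max_left _ _) hx
    have hx₂x : x₂ ≤ x := le_trans (le_max_right _ _) hx
    have hx0 : 0 < x := lt_of_lt_of_le one_pos (le_trans hx₀1 hx₀x)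
    have htailnn : 0 ≤ ∑' i, if M ≤ i then m i else 0 :=
      tsum_nonneg fun i => by split_ifs <;> simp [hmnn]
    have hterm : ∀ i : ℕ,
        (if M ≤ i then (P {ω | Real.exp (-(r * τ i ω)) • X i ω ∈ x • A}).toReal else 0)
          ≤ (if M ≤ i then C * g x * m i else 0) := by
      intro i
      split_ifs with h
      · rw [hset i x hx0]; exact hub i x hx₀x
      · exact le_refl 0
    have htermnn : ∀ i : ℕ, 0 ≤
        (if M ≤ i then (P {ω | Real.exp (-(r * τ i ω)) • X i ω ∈ x • A}).toReal else 0) :=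
      fun i => by split_ifs <;> simp [ENNReal.toReal_nonneg]
    have hsum2 : Summable (fun i => if M ≤ i then C * g x * m i else 0) := by
      refine Summable.of_nonneg_of_le (fun i => ?_) (fun i => ?_) (hmsum.mul_left (C * g x))
      · split_ifs
        · exact mul_nonneg (mul_nonneg hC0.le (hgpos x).le) (hmnn i)
        · exact le_refl 0
      · split_ifs
        · exact le_refl _
        · exact mul_nonneg (mul_nonneg hC0.le (hgpos x).le) (hmnn i)
    have hsum1 : Summable (fun i =>
        if M ≤ i then (P {ω | Real.exp (-(r * τ i ω)) • X i ω ∈ x • A}).toReal else 0) :=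
      Summable.of_nonneg_of_le htermnn hterm hsum2
    have hnum_le : (∑' i : ℕ, if M ≤ i then
        (P {ω | Real.exp (-(r * τ i ω)) • X i ω ∈ x • A}).toReal else 0)
          ≤ C * g x * (∑' i, if M ≤ i then m i else 0) := by
      calc (∑' i : ℕ, if M ≤ i then
          (P {ω | Real.exp (-(r * τ i ω)) • X i ω ∈ x • A}).toReal else 0)
          ≤ ∑' i, (if M ≤ i then C * g x * m i else 0) := Summable.tsum_le_tsum hterm hsum1 hsum2
        _ = C * g x * ∑' i, (if M ≤ i then m i else 0) := by
            rw [← tsum_mul_left]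
            apply tsum_congr
            intro i; split_ifs <;> simp
    have hDden := hlb x hx₂x
    rw [hset 0 x hx0]
    have hD0 : 0 < (P {ω | x * Real.exp (r * τ 0 ω) < projA A (X 0 ω)}).toReal :=
      lt_of_lt_of_le (mul_pos (mul_pos hκ0 hpT) (hgpos x)) hDden
    calc (∑' i : ℕ, if M ≤ i then
          (P {ω | Real.exp (-(r * τ i ω)) • X i ω ∈ x • A}).toReal else 0) /
          (P {ω | x * Real.exp (r * τ 0 ω) < projA A (X 0 ω)}).toReal
        ≤ (C * g x * (∑' i, if M ≤ i then m i else 0)) / (κ * pT * g x) :=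
          div_le_div₀ (mul_nonneg (mul_nonneg hC0.le (hgpos x).le) htailnn) hnum_le
            (mul_pos (mul_pos hκ0 hpT) (hgpos x)) hDden
      _ = K * (∑' i, if M ≤ i then m i else 0) := by
          rw [hKdef]
          have hgx := (hgpos x).ne'
          field_simp
  have hratio_nonneg : ∀ M : ℕ, ∀ x : ℝ, 0 ≤
      (∑' i : ℕ, if M ≤ i then
          (P {ω | Real.exp (-(r * τ i ω)) • X i ω ∈ x • A}).toReal else 0) /
        (P {ω | Real.exp (-(r * τ 0 ω)) • X 0 ω ∈ x • A}).toReal := by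
    intro M x
    apply div_nonneg _ ENNReal.toReal_nonneg
    exact tsum_nonneg fun i => by positivity
  refine tendsto_of_tendsto_of_tendsto_of_le_of_le (g := fun _ : ℕ => (0:ℝ))
    (h := fun M : ℕ => K * (∑' i, if M ≤ i then m i else 0)) tendsto_const_nhds
    ?_ ?_ ?_
  · have := htail.const_mul K
    simpa using this
  · intro M
    refine le_limsup_of_frequently_le ?_ ?_
    · exact Eventually.frequently (Eventually.of_forall fun x => hratio_nonneg M x)
    · exact ⟨K * (∑' i, if M ≤ i then m i else 0), eventually_map.2
        (by filter_upwards [eventually_ge_atTop (max x₀ x₂)] with x hx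
            exact hfin M x hx)⟩
  · intro M
    refine limsup_le_of_le ?_ ?_
    · have hbb : IsBoundedUnder (· ≥ ·) atTop (fun x : ℝ =>
          (∑' i : ℕ, if M ≤ i then
              (P {ω | Real.exp (-(r * τ i ω)) • X i ω ∈ x • A}).toReal else 0) /
            (P {ω | Real.exp (-(r * τ 0 ω)) • X 0 ω ∈ x • A}).toReal) :=
        ⟨0, eventually_map.2 (Eventually.of_forall fun x => hratio_nonneg M x)⟩
      exact hbb.isCoboundedUnder_le
    · filter_upwards [eventually_ge_atTop (max x₀ x₂)] with x hx
      exact hfin M x hx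
end
end

section
/- Fix d ≥ 1, A ∈ 𝓡, and r > 0, and let F be a distribution on [0,∞)^d with F ∈ (𝒞∩𝒫_𝒟)_A (so that 0 < J_{F_A}^− ≤ J_{F_A}^+ < ∞). Let the inter-arrival times θ_i := τ_i − τ_{i−1} (with τ₀ := 0) be nonnegative, identically distributed, with P(θ₁ > 0) > 0, and widely lower orthant dependent (WLOD): there exist finite positive constants g_L(n), n ≥ 1, such that P(θ₁ ≤ x₁, …, θ_n ≤ x_n) ≤ g_L(n) Π_{i=1}^n P(θ_i ≤ x_i) for all n and all real x₁, …, x_n. Suppose there exists δ ∈ (0, −log E[e^{−r J_{F_A}^− θ₁}]) such that limsup_{n→∞} g_L(n) e^{−δ n} < ∞. Then Assumption 3.1 holds: there exist q₁, q₂ with 0 < q₁ < J_{F_A}^− ≤ J_{F_A}^+ < q₂ < ∞ such that Σ_{i=1}^∞ (max(E[e^{−q₁ r τ_i}], E[e^{−q₂ r τ_i}]))^{1/q} < ∞, where q := 1 if J_{F_A}^+ < 1 and q := q₂ if J_{F_A}^+ ≥ 1. -/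
open MeasureTheory ProbabilityTheory Filter Topology Set
open scoped Pointwise ENNReal NNReal

noncomputable section

/-!
For the tail `g` of `F_A`, `upperRatio g` is submultiplicative and `lowerRatio g`
supermultiplicative on `[1, ∞)`, and consistent variation gives `lowerRatio g V ≥ 1/2` for some
`V > 1`, hence `|log (lowerRatio g v)| = O(log v)`. Fekete's lemma in the variable `log v` shows
that the limits defining `J⁻` and `J⁺` exist, and `lowerRatio ≤ upperRatio` gives `J⁻ ≤ J⁺`.

As `-log E e^{-r J⁻ θ₁} > δ > 0`, we have `J⁻ > 0`, and continuity of the Laplace transform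
gives `q₁ < J⁻` with `E e^{-q₁ r θ₁} < e^{-δ}`. For `c > 0` and `y ≥ 0`, `e^{-c y} = μ [y, ∞)`
with `μ` the exponential law of rate `c`; exchanging the order of integration turns the WLOD
bound on joint distribution functions into `E e^{-c τ_n} ≤ g_L(n) (E e^{-c θ₁})^n`. With
`g_L(n) ≤ K e^{δ n}` this is at most `K (e^δ E e^{-c θ₁})^n`, a geometric sequence; the
`q₂`-moments are smaller still.
-/

section Fekete

variable {f : ℝ → ℝ} {B : ℝ}

theorem abs_le_two_mul_of_mem_Icc (hbd : ∀ t, 0 ≤ t → |f t| ≤ B * (t + 1)) {s : ℝ}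
    (hs : s ∈ Icc (0 : ℝ) 1) : |f s| ≤ 2 * B := by
  have hB : 0 ≤ B := by simpa using (abs_nonneg _).trans (hbd 0 le_rfl)
  exact (hbd s hs.1).trans (by nlinarith [hs.2])

theorem apply_le_apply_floor_add (hsub : ∀ s t, 0 ≤ s → 0 ≤ t → f (s + t) ≤ f s + f t)
    (hbd : ∀ t, 0 ≤ t → |f t| ≤ B * (t + 1)) {t : ℝ} (ht : 0 ≤ t) :
    f t ≤ f ⌊t⌋₊ + 2 * B := by
  have hfrac : t - ⌊t⌋₊ ∈ Icc (0 : ℝ) 1 :=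
    ⟨sub_nonneg.2 (Nat.floor_le ht), by linarith [Nat.lt_floor_add_one t]⟩
  have h := hsub ⌊t⌋₊ (t - ⌊t⌋₊) (by positivity) hfrac.1
  rw [add_sub_cancel] at h
  linarith [le_abs_self (f (t - ⌊t⌋₊)), abs_le_two_mul_of_mem_Icc hbd hfrac]

theorem apply_ceil_sub_le_apply (hsub : ∀ s t, 0 ≤ s → 0 ≤ t → f (s + t) ≤ f s + f t)
    (hbd : ∀ t, 0 ≤ t → |f t| ≤ B * (t + 1)) {t : ℝ} (ht : 0 ≤ t) :
    f ⌈t⌉₊ - 2 * B ≤ f t := by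
  have hfrac : ⌈t⌉₊ - t ∈ Icc (0 : ℝ) 1 :=
    ⟨sub_nonneg.2 (Nat.le_ceil t), by linarith [Nat.ceil_lt_add_one ht]⟩
  have h := hsub t (⌈t⌉₊ - t) ht hfrac.1
  rw [add_sub_cancel] at h
  linarith [le_abs_self (f (⌈t⌉₊ - t)), abs_le_two_mul_of_mem_Icc hbd hfrac]

/-- Fekete's lemma for functions of a real variable: the limit along the integers, given by
`Subadditive.tendsto_lim`, is the limit along the reals because `f` moves by at most `2 B`
between `⌊t⌋`, `t` and `⌈t⌉`. -/
theorem exists_tendsto_div_of_subadditive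
    (hsub : ∀ s t, 0 ≤ s → 0 ≤ t → f (s + t) ≤ f s + f t)
    (hbd : ∀ t, 0 ≤ t → |f t| ≤ B * (t + 1)) :
    ∃ L, Tendsto (fun t => f t / t) atTop (𝓝 L) := by
  have hB : 0 ≤ B := by simpa using (abs_nonneg _).trans (hbd 0 le_rfl)
  have hu : Subadditive fun n : ℕ => f n := fun m n => by
    simpa only [Nat.cast_add] using hsub m n m.cast_nonneg n.cast_nonneg
  have hbdd : BddBelow (range fun n : ℕ => f n / n) := by
    refine ⟨-(2 * B), ?_⟩
    rintro _ ⟨n, rfl⟩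
    rcases n.eq_zero_or_pos with rfl | hn
    · simpa using hB
    · have hn' : (1 : ℝ) ≤ n := by exact_mod_cast hn
      rw [le_div_iff₀ (by positivity)]
      nlinarith [neg_abs_le (f n), hbd n n.cast_nonneg]
  have hL := hu.tendsto_lim hbdd
  have hB0 : Tendsto (fun t : ℝ => 2 * B / t) atTop (𝓝 0) :=
    tendsto_const_nhds.div_atTop tendsto_id
  have hup : Tendsto (fun t : ℝ => f ⌊t⌋₊ / ⌊t⌋₊ * (⌊t⌋₊ / t) + 2 * B / t) atTop
      (𝓝 (hu.lim * 1 + 0)) :=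
    ((hL.comp tendsto_nat_floor_atTop).mul tendsto_nat_floor_div_atTop).add hB0
  have hlow : Tendsto (fun t : ℝ => f ⌈t⌉₊ / ⌈t⌉₊ * (⌈t⌉₊ / t) - 2 * B / t) atTop
      (𝓝 (hu.lim * 1 - 0)) :=
    ((hL.comp tendsto_nat_ceil_atTop).mul tendsto_nat_ceil_div_atTop).sub hB0
  rw [mul_one, add_zero] at hup
  rw [mul_one, sub_zero] at hlow
  refine ⟨hu.lim, tendsto_of_tendsto_of_tendsto_of_le_of_le' hlow hup ?_ ?_⟩
  · filter_upwards [eventually_gt_atTop 0] with t ht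
    rw [div_mul_div_cancel₀ (by positivity), ← sub_div]
    exact div_le_div_of_nonneg_right (apply_ceil_sub_le_apply hsub hbd ht.le) ht.le
  · filter_upwards [eventually_ge_atTop 1] with t ht
    rw [div_mul_div_cancel₀ (Nat.cast_ne_zero.2 (Nat.floor_pos.2 ht).ne'), ← add_div]
    exact div_le_div_of_nonneg_right (apply_le_apply_floor_add hsub hbd (by linarith))
      (by linarith)

end Fekete

theorem exists_tendsto_log_div_log_of_submultiplicative {h : ℝ → ℝ} {B : ℝ}
    (hpos : ∀ v, 1 ≤ v → 0 < h v) (hmul : ∀ u v, 1 ≤ u → 1 ≤ v → h (u * v) ≤ h u * h v)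
    (hbd : ∀ v, 1 ≤ v → |Real.log (h v)| ≤ B * (Real.log v + 1)) :
    ∃ L, Tendsto (fun v => Real.log (h v) / Real.log v) atTop (𝓝 L) := by
  have hexp : ∀ t, 0 ≤ t → 1 ≤ Real.exp t := fun t ht => Real.one_le_exp ht
  obtain ⟨L, hL⟩ := exists_tendsto_div_of_subadditive (f := fun t => Real.log (h (Real.exp t)))
    (B := B) (fun s t hs ht => by
      rw [Real.exp_add, ← Real.log_mul (hpos _ (hexp s hs)).ne' (hpos _ (hexp t ht)).ne']
      exact Real.log_le_log (hpos _ (one_le_mul_of_one_le_of_one_le (hexp s hs) (hexp t ht)))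
        (hmul _ _ (hexp s hs) (hexp t ht)))
    (fun t ht => by simpa using hbd _ (hexp t ht))
  refine ⟨L, (hL.comp Real.tendsto_log_atTop).congr' ?_⟩
  filter_upwards [eventually_gt_atTop 0] with v hv
  simp [Real.exp_log hv]

def upperRatio (g : ℝ → ℝ) (v : ℝ) : ℝ := limsup (fun x => g (v * x) / g x) atTop

def lowerRatio (g : ℝ → ℝ) (v : ℝ) : ℝ := liminf (fun x => g (v * x) / g x) atTop

namespace TailRatio

variable {g : ℝ → ℝ} {u v : ℝ}

theorem isBoundedUnder_ge (hg : ∀ x, 0 < g x) (v : ℝ) :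
    IsBoundedUnder (· ≥ ·) atTop fun x => g (v * x) / g x :=
  isBoundedUnder_of_eventually_ge (.of_forall fun x => div_nonneg (hg _).le (hg x).le)

theorem eventually_le_one (hg : ∀ x, 0 < g x) (hanti : Antitone g) (hv : 1 ≤ v) :
    ∀ᶠ x in atTop, g (v * x) / g x ≤ 1 := by
  filter_upwards [eventually_ge_atTop 0] with x hx
  exact (div_le_one (hg x)).2 (hanti (le_mul_of_one_le_left hx hv))

theorem isBoundedUnder_le (hg : ∀ x, 0 < g x) (hanti : Antitone g) (hv : 1 ≤ v) :
    IsBoundedUnder (· ≤ ·) atTop fun x => g (v * x) / g x :=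
  isBoundedUnder_of_eventually_le (eventually_le_one hg hanti hv)

theorem upperRatio_le_one (hg : ∀ x, 0 < g x) (hanti : Antitone g) (hv : 1 ≤ v) :
    upperRatio g v ≤ 1 :=
  limsup_le_of_le (isBoundedUnder_ge hg v).isCoboundedUnder_le (eventually_le_one hg hanti hv)

theorem lowerRatio_le_upperRatio (hg : ∀ x, 0 < g x) (hanti : Antitone g) (hv : 1 ≤ v) :
    lowerRatio g v ≤ upperRatio g v :=
  liminf_le_limsup (isBoundedUnder_le hg hanti hv) (isBoundedUnder_ge hg v)

theorem ratio_mul (hg : ∀ x, 0 < g x) (hv : 0 < v) :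
    (fun x => g (u * v * x) / g x) =
      ((fun x => g (u * x) / g x) ∘ (OrderIso.mulLeft₀ v hv)) * fun x => g (v * x) / g x := by
  ext x
  simp [mul_assoc, div_mul_div_cancel₀ (hg (v * x)).ne']

theorem upperRatio_mul_le (hg : ∀ x, 0 < g x) (hanti : Antitone g) (hu : 1 ≤ u) (hv : 1 ≤ v) :
    upperRatio g (u * v) ≤ upperRatio g u * upperRatio g v := by
  have hv0 : 0 < v := by linarith
  have hmap := (OrderIso.mulLeft₀ v hv0).map_atTop
  have hcomp : upperRatio g u =
      limsup ((fun x => g (u * x) / g x) ∘ (OrderIso.mulLeft₀ v hv0)) atTop := by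
    rw [limsup_comp, hmap]; rfl
  rw [hcomp]
  unfold upperRatio
  rw [ratio_mul hg hv0]
  exact limsup_mul_le
    (.of_forall fun x => div_nonneg (hg _).le (hg _).le)
    ((OrderIso.mulLeft₀ v hv0).tendsto_atTop.isBoundedUnder_comp (isBoundedUnder_le hg hanti hu))
    (.of_forall fun x => div_nonneg (hg _).le (hg _).le)
    (isBoundedUnder_le hg hanti hv)

theorem lowerRatio_mul_le (hg : ∀ x, 0 < g x) (hanti : Antitone g) (hu : 1 ≤ u) (hv : 1 ≤ v) :
    lowerRatio g u * lowerRatio g v ≤ lowerRatio g (u * v) := by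
  have hv0 : 0 < v := by linarith
  have hmap := (OrderIso.mulLeft₀ v hv0).map_atTop
  have hcomp : lowerRatio g u =
      liminf ((fun x => g (u * x) / g x) ∘ (OrderIso.mulLeft₀ v hv0)) atTop := by
    rw [liminf_comp, hmap]; rfl
  rw [hcomp]
  unfold lowerRatio
  rw [ratio_mul hg hv0]
  exact le_liminf_mul
    (.of_forall fun x => div_nonneg (hg _).le (hg _).le)
    ((OrderIso.mulLeft₀ v hv0).tendsto_atTop.isBoundedUnder_comp (isBoundedUnder_le hg hanti hu))
    (.of_forall fun x => div_nonneg (hg _).le (hg _).le)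
    (isBoundedUnder_le hg hanti hv).isCoboundedUnder_ge

theorem lowerRatio_nonneg (hg : ∀ x, 0 < g x) (hanti : Antitone g) (hv : 1 ≤ v) :
    0 ≤ lowerRatio g v :=
  le_liminf_of_le (isBoundedUnder_le hg hanti hv).isCoboundedUnder_ge
    (.of_forall fun x => div_nonneg (hg _).le (hg x).le)

theorem lowerRatio_one (hg : ∀ x, 0 < g x) : lowerRatio g 1 = 1 := by
  simp [lowerRatio, div_self (hg _).ne']

theorem lowerRatio_le_of_le (hg : ∀ x, 0 < g x) (hanti : Antitone g) (hv : 1 ≤ v)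
    (hvu : v ≤ u) : lowerRatio g u ≤ lowerRatio g v := by
  refine liminf_le_liminf ?_ (isBoundedUnder_ge hg u)
    (isBoundedUnder_le hg hanti hv).isCoboundedUnder_ge
  filter_upwards [eventually_ge_atTop 0] with x hx
  exact div_le_div_of_nonneg_right (hanti (mul_le_mul_of_nonneg_right hvu hx)) (hg x).le

theorem lowerRatio_pow_le (hg : ∀ x, 0 < g x) (hanti : Antitone g) (hv : 1 ≤ v) (n : ℕ) :
    lowerRatio g v ^ n ≤ lowerRatio g (v ^ n) := by
  induction n with
  | zero => simp [lowerRatio_one hg]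
  | succ n ih =>
    rw [pow_succ, pow_succ]
    exact (mul_le_mul_of_nonneg_right ih (lowerRatio_nonneg hg hanti hv)).trans
      (lowerRatio_mul_le hg hanti (one_le_pow₀ hv) hv)

theorem exists_half_le_lowerRatio (hg : ∀ x, 0 < g x) (hanti : Antitone g) (hC : ClassC g) :
    ∃ V, 1 < V ∧ 1 / 2 ≤ lowerRatio g V := by
  obtain ⟨b, hb, hb01⟩ := ((hC.eventually (Ioo_mem_nhds (by norm_num : (0 : ℝ) < 1)
    (by norm_num : (1 : ℝ) < 2))).and (Ioo_mem_nhdsLT (by norm_num : (0 : ℝ) < 1))).exists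
  -- a positive `limsup` of reals is not the junk value of an unbounded sequence
  have hbdd : IsBoundedUnder (· ≤ ·) atTop fun x => g (b * x) / g x := by
    by_contra hnot
    exact (Real.limsup_of_not_isBoundedUnder hnot ▸ hb.1).false
  have hlt : ∀ᶠ x in atTop, g (b * x) / g x < 2 := eventually_lt_of_limsup_lt hb.2 hbdd
  have hV : 1 < b⁻¹ := (one_lt_inv₀ hb01.1).2 hb01.2
  refine ⟨b⁻¹, hV, le_liminf_of_le (isBoundedUnder_le hg hanti hV.le).isCoboundedUnder_ge ?_⟩
  filter_upwards [(tendsto_id.const_mul_atTop (inv_pos.2 hb01.1)).eventually hlt] with x hx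
  rw [← mul_assoc, mul_inv_cancel₀ hb01.1.ne', one_mul, div_lt_iff₀ (hg _), id] at hx
  rw [le_div_iff₀ (hg x)]
  linarith

theorem exists_neg_log_lowerRatio_le (hg : ∀ x, 0 < g x) (hanti : Antitone g) (hC : ClassC g) :
    ∃ B, ∀ v, 1 ≤ v → 0 < lowerRatio g v ∧
      -Real.log (lowerRatio g v) ≤ B * (Real.log v + 1) := by
  obtain ⟨V, hV, hhalf⟩ := exists_half_le_lowerRatio hg hanti hC
  have hlogV : 0 < Real.log V := Real.log_pos hV
  refine ⟨Real.log 2 / Real.log V + Real.log 2, fun v hv => ?_⟩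
  set n := ⌈Real.log v / Real.log V⌉₊
  have hvn : v ≤ V ^ n := by
    rw [← Real.log_le_log_iff (by linarith) (by positivity), Real.log_pow,
      ← div_le_iff₀ hlogV]
    exact Nat.le_ceil _
  have hlow : (1 / 2 : ℝ) ^ n ≤ lowerRatio g v :=
    (pow_le_pow_left₀ (by norm_num) hhalf n).trans
      ((lowerRatio_pow_le hg hanti hV.le n).trans (lowerRatio_le_of_le hg hanti hv hvn))
  have hpos : 0 < lowerRatio g v := lt_of_lt_of_le (by positivity) hlow
  refine ⟨hpos, ?_⟩
  have hn : (n : ℝ) < Real.log v / Real.log V + 1 :=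
    Nat.ceil_lt_add_one (div_nonneg (Real.log_nonneg hv) hlogV.le)
  have hlog2 : 0 < Real.log 2 := Real.log_pos one_lt_two
  calc -Real.log (lowerRatio g v) ≤ -Real.log ((1 / 2 : ℝ) ^ n) :=
        neg_le_neg (Real.log_le_log (by positivity) hlow)
    _ = n * Real.log 2 := by simp [Real.log_pow, Real.log_inv]
    _ ≤ (Real.log v / Real.log V + 1) * Real.log 2 := by gcongr
    _ ≤ (Real.log 2 / Real.log V + Real.log 2) * (Real.log v + 1) := by
        have : 0 ≤ Real.log v := Real.log_nonneg hv
        rw [div_add_one hlogV.ne', div_mul_eq_mul_div, div_add' _ _ _ hlogV.ne',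
          div_mul_eq_mul_div, div_le_div_iff_of_pos_right hlogV]
        nlinarith [mul_nonneg (mul_nonneg this hlog2.le) hlogV.le]

end TailRatio

open TailRatio in
theorem Jminus_le_Jplus {g : ℝ → ℝ} (hg : ∀ x, 0 < g x) (hanti : Antitone g) (hC : ClassC g) :
    Jminus g ≤ Jplus g := by
  obtain ⟨B, hB⟩ := exists_neg_log_lowerRatio_le hg hanti hC
  have hlow_le : ∀ v, 1 ≤ v → Real.log (lowerRatio g v) ≤ Real.log (upperRatio g v) :=
    fun v hv => Real.log_le_log (hB v hv).1 (lowerRatio_le_upperRatio hg hanti hv)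
  have hup_le : ∀ v, 1 ≤ v → Real.log (upperRatio g v) ≤ 0 := fun v hv =>
    Real.log_nonpos ((hB v hv).1.trans_le (lowerRatio_le_upperRatio hg hanti hv)).le
      (upperRatio_le_one hg hanti hv)
  obtain ⟨Lm, hLm⟩ := exists_tendsto_log_div_log_of_submultiplicative (h := upperRatio g) (B := B)
    (fun v hv => (hB v hv).1.trans_le (lowerRatio_le_upperRatio hg hanti hv))
    (fun u v hu hv => upperRatio_mul_le hg hanti hu hv)
    (fun v hv => by
      rw [abs_of_nonpos (hup_le v hv)]
      linarith [hlow_le v hv, (hB v hv).2])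
  obtain ⟨Lp, hLp⟩ := exists_tendsto_log_div_log_of_submultiplicative
    (h := fun v => (lowerRatio g v)⁻¹) (B := B)
    (fun v hv => inv_pos.2 (hB v hv).1)
    (fun u v hu hv => by
      rw [← mul_inv]
      exact inv_anti₀ (mul_pos (hB u hu).1 (hB v hv).1) (lowerRatio_mul_le hg hanti hu hv))
    (fun v hv => by
      rw [Real.log_inv, abs_of_nonneg (by linarith [hlow_le v hv, hup_le v hv])]
      exact (hB v hv).2)
  simp only [Real.log_inv, neg_div] at hLp
  have hLp' := hLp.neg
  simp only [neg_neg] at hLp'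
  have hJm : Jminus g = -Lm := congrArg Neg.neg hLm.limUnder_eq
  have hJp : Jplus g = -(-Lp) := congrArg Neg.neg hLp'.limUnder_eq
  rw [hJm, hJp, neg_le_neg_iff]
  refine le_of_tendsto_of_tendsto hLp' hLm ?_
  filter_upwards [eventually_gt_atTop 1] with v hv
  exact div_le_div_of_nonneg_right (hlow_le v hv.le) (Real.log_pos hv).le

section LowerOrthant

variable {Ω : Type*} [MeasurableSpace Ω]

theorem lintegral_measure_Ici_eq (P : Measure Ω) [SFinite P] (μ : Measure ℝ) [SFinite μ]
    {X : Ω → ℝ} (hX : Measurable X) :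
    ∫⁻ ω, μ (Ici (X ω)) ∂P = ∫⁻ t, P {ω | X ω ≤ t} ∂μ := by
  have hS : MeasurableSet {p : Ω × ℝ | X p.1 ≤ p.2} :=
    measurableSet_le (hX.comp measurable_fst) measurable_snd
  exact (Measure.prod_apply hS).symm.trans (Measure.prod_apply_symm hS)

theorem lintegral_prod_measure_Ici_le {ι : Type*} [Fintype ι] (P : Measure Ω) [SFinite P]
    (μ : Measure ℝ) [IsProbabilityMeasure μ] {θ : ι → Ω → ℝ} (hθ : ∀ i, Measurable (θ i))
    {C : ℝ≥0∞} (hlow : ∀ x : ι → ℝ, P {ω | ∀ i, θ i ω ≤ x i} ≤ C * ∏ i, P {ω | θ i ω ≤ x i}) :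
    ∫⁻ ω, ∏ i, μ (Ici (θ i ω)) ∂P ≤ C * ∏ i, ∫⁻ ω, μ (Ici (θ i ω)) ∂P := by
  set ν := Measure.pi fun _ : ι => μ
  have hS : MeasurableSet {p : Ω × (ι → ℝ) | ∀ i, θ i p.1 ≤ p.2 i} := by
    simp only [ofPred_forall]
    exact .iInter fun i => measurableSet_le ((hθ i).comp measurable_fst)
      ((measurable_pi_apply i).comp measurable_snd)
  have hcdf : ∀ i, Measurable fun t => P {ω | θ i ω ≤ t} := fun i =>
    Monotone.measurable fun s t hst => measure_mono fun ω hω => le_trans hω hst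
  have hprod : Measurable fun x : ι → ℝ => ∏ i, P {ω | θ i ω ≤ x i} :=
    Finset.measurable_prod _ fun i _ => (hcdf i).comp (measurable_pi_apply i)
  calc ∫⁻ ω, ∏ i, μ (Ici (θ i ω)) ∂P
      = ∫⁻ ω, ν (Prod.mk ω ⁻¹' {p : Ω × (ι → ℝ) | ∀ i, θ i p.1 ≤ p.2 i}) ∂P := by
        refine lintegral_congr fun ω => ?_
        rw [← Measure.pi_pi]
        congr 1
        ext x
        simp [Pi.le_def]
    _ = ∫⁻ x, P {ω | ∀ i, θ i ω ≤ x i} ∂ν :=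
        (Measure.prod_apply hS).symm.trans (Measure.prod_apply_symm hS)
    _ ≤ ∫⁻ x, C * ∏ i, P {ω | θ i ω ≤ x i} ∂ν := lintegral_mono fun x => hlow x
    _ = C * ∏ i, ∫⁻ x, P {ω | θ i ω ≤ x i} ∂ν := by
        rw [lintegral_const_mul _ hprod,
          lintegral_prod_eq_prod_lintegral_of_indepFun Finset.univ _
            (iIndepFun_pi fun i => (hcdf i).aemeasurable) fun i =>
              (hcdf i).comp (measurable_pi_apply i)]
    _ = C * ∏ i, ∫⁻ ω, μ (Ici (θ i ω)) ∂P := by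
        congr 1
        refine Finset.prod_congr rfl fun i _ => ?_
        rw [lintegral_measure_Ici_eq P μ (hθ i)]
        exact (measurePreserving_eval (fun _ => μ) i).lintegral_comp (hcdf i)

end LowerOrthant

theorem expMeasure_Ici {c y : ℝ} (hc : 0 < c) (hy : 0 ≤ y) :
    expMeasure c (Ici y) = ENNReal.ofReal (Real.exp (-(c * y))) := by
  have hint : IntegrableOn (fun t => c * Real.exp (-c * t)) (Ici y) :=
    (integrableOn_Ici_iff_integrableOn_Ioi (μ := volume) |>.2
      (integrableOn_exp_mul_Ioi (neg_neg_of_pos hc) y)).const_mul c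
  rw [expMeasure, gammaMeasure, withDensity_apply _ measurableSet_Ici,
    setLIntegral_congr_fun measurableSet_Ici (g := fun t => ENNReal.ofReal (c * Real.exp (-c * t)))
      fun t ht => by
        change exponentialPDF c t = _
        rw [exponentialPDF_of_nonneg (hy.trans ht)]
        simp only [neg_mul],
    ← ofReal_integral_eq_lintegral_ofReal hint (ae_of_all _ fun t => by positivity),
    integral_Ici_eq_integral_Ioi, integral_const_mul, integral_exp_mul_Ioi (neg_neg_of_pos hc)]
  congr 1
  field_simp

section Laplace

variable {Ω : Type*} [MeasurableSpace Ω] {P : Measure Ω} {X : Ω → ℝ}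

theorem integrable_exp_neg_mul [IsFiniteMeasure P] (hX : Measurable X) (hX0 : ∀ ω, 0 ≤ X ω)
    {q : ℝ} (hq : 0 ≤ q) : Integrable (fun ω => Real.exp (-(q * X ω))) P := by
  refine Integrable.of_bound (hX.const_mul q).neg.exp.aestronglyMeasurable 1
    (.of_forall fun ω => ?_)
  rw [Real.norm_of_nonneg (Real.exp_pos _).le, Real.exp_le_one_iff, neg_nonpos]
  exact mul_nonneg hq (hX0 ω)

theorem integral_exp_neg_mul_le_of_le [IsFiniteMeasure P] (hX : Measurable X)
    (hX0 : ∀ ω, 0 ≤ X ω) {q q' : ℝ} (hq : 0 ≤ q) (hqq' : q ≤ q') :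
    ∫ ω, Real.exp (-(q' * X ω)) ∂P ≤ ∫ ω, Real.exp (-(q * X ω)) ∂P :=
  integral_mono (integrable_exp_neg_mul hX hX0 (hq.trans hqq')) (integrable_exp_neg_mul hX hX0 hq)
    fun ω => Real.exp_le_exp.2 (neg_le_neg (mul_le_mul_of_nonneg_right hqq' (hX0 ω)))

theorem continuousAt_integral_exp_neg_mul [IsFiniteMeasure P] (hX : Measurable X)
    (hX0 : ∀ ω, 0 ≤ X ω) {q : ℝ} (hq : 0 < q) :
    ContinuousAt (fun q => ∫ ω, Real.exp (-(q * X ω)) ∂P) q := by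
  refine continuousAt_of_dominated (bound := fun _ => 1)
    (.of_forall fun q => (hX.const_mul q).neg.exp.aestronglyMeasurable) ?_
    (integrable_const 1) (.of_forall fun ω => by fun_prop)
  filter_upwards [eventually_gt_nhds hq] with p hp
  refine .of_forall fun ω => ?_
  rw [Real.norm_of_nonneg (Real.exp_pos _).le, Real.exp_le_one_iff, neg_nonpos]
  exact mul_nonneg hp.le (hX0 ω)

/-- For `q ≤ 0` the Laplace transform is at least `1` (or the junk value `0`), so its
negative logarithm is not positive. -/
theorem pos_of_lt_neg_log_integral_exp_neg_mul [IsProbabilityMeasure P] (hX0 : ∀ ω, 0 ≤ X ω)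
    {q δ : ℝ} (hδ0 : 0 < δ) (hδ : δ < -Real.log (∫ ω, Real.exp (-(q * X ω)) ∂P)) : 0 < q := by
  by_contra! hq
  suffices 0 ≤ Real.log (∫ ω, Real.exp (-(q * X ω)) ∂P) by linarith
  by_cases hint : Integrable (fun ω => Real.exp (-(q * X ω))) P
  · refine Real.log_nonneg ?_
    calc (1 : ℝ) = ∫ _, (1 : ℝ) ∂P := by simp
      _ ≤ _ := integral_mono (integrable_const 1) hint fun ω =>
          Real.one_le_exp (neg_nonneg.2 (mul_nonpos_of_nonpos_of_nonneg hq (hX0 ω)))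
  · simp [integral_undef hint]

theorem exists_lt_integral_exp_neg_mul_lt [IsProbabilityMeasure P] (hX : Measurable X)
    (hX0 : ∀ ω, 0 ≤ X ω) {L δ : ℝ} (hδ0 : 0 < δ)
    (hδ : δ < -Real.log (∫ ω, Real.exp (-(L * X ω)) ∂P)) :
    ∃ q, 0 < q ∧ q < L ∧ ∫ ω, Real.exp (-(q * X ω)) ∂P < Real.exp (-δ) := by
  have hL := pos_of_lt_neg_log_integral_exp_neg_mul hX0 hδ0 hδ
  have hpos : 0 < ∫ ω, Real.exp (-(L * X ω)) ∂P :=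
    integral_exp_pos (integrable_exp_neg_mul hX hX0 hL.le)
  have hlt : ∫ ω, Real.exp (-(L * X ω)) ∂P < Real.exp (-δ) := by
    rw [← Real.log_lt_iff_lt_exp hpos]
    linarith
  obtain ⟨q, hq, hqL⟩ := (((continuousAt_integral_exp_neg_mul hX hX0 hL).tendsto.mono_left
    nhdsWithin_le_nhds).eventually (gt_mem_nhds hlt)).and (Ioo_mem_nhdsLT hL) |>.exists
  exact ⟨q, hqL.1, hqL.2, hq⟩

end Laplace

section ExpMoments

variable {Ω : Type*} [MeasurableSpace Ω] {P : Measure Ω} [IsProbabilityMeasure P]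

theorem integral_exp_neg_mul_sum_le {ι : Type*} [Fintype ι] {θ : ι → Ω → ℝ}
    (hθ : ∀ i, Measurable (θ i)) (hθ0 : ∀ i ω, 0 ≤ θ i ω) {C : ℝ} (hC : 0 ≤ C)
    (hlow : ∀ x : ι → ℝ,
      (P {ω | ∀ i, θ i ω ≤ x i}).toReal ≤ C * ∏ i, (P {ω | θ i ω ≤ x i}).toReal)
    {c : ℝ} (hc : 0 < c) :
    ∫ ω, Real.exp (-(c * ∑ i, θ i ω)) ∂P ≤ C * ∏ i, ∫ ω, Real.exp (-(c * θ i ω)) ∂P := by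
  have := isProbabilityMeasure_expMeasure hc
  have hlow' : ∀ x : ι → ℝ, P {ω | ∀ i, θ i ω ≤ x i} ≤
      ENNReal.ofReal C * ∏ i, P {ω | θ i ω ≤ x i} := fun x => by
    rw [← ENNReal.ofReal_toReal (measure_ne_top P _)]
    refine (ENNReal.ofReal_le_ofReal (hlow x)).trans_eq ?_
    rw [ENNReal.ofReal_mul hC, ENNReal.ofReal_prod_of_nonneg fun i _ => ENNReal.toReal_nonneg]
    simp_rw [ENNReal.ofReal_toReal (measure_ne_top P _)]
  have hexp : ∀ i ω, ENNReal.ofReal (Real.exp (-(c * θ i ω))) = expMeasure c (Ici (θ i ω)) :=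
    fun i ω => (expMeasure_Ici hc (hθ0 i ω)).symm
  have hfin : ∀ i, ∫⁻ ω, expMeasure c (Ici (θ i ω)) ∂P ≠ ⊤ := fun i =>
    ne_top_of_le_ne_top (by simp) (lintegral_mono fun ω => prob_le_one (μ := expMeasure c))
  have hlin : ∀ f : Ω → ℝ, Measurable f →
      ∫ ω, Real.exp (f ω) ∂P = (∫⁻ ω, ENNReal.ofReal (Real.exp (f ω)) ∂P).toReal :=
    fun f hf => integral_eq_lintegral_of_nonneg_ae (.of_forall fun ω => (Real.exp_pos _).le)
      hf.exp.aestronglyMeasurable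
  have hprod : ∀ ω, ENNReal.ofReal (Real.exp (-(c * ∑ i, θ i ω))) =
      ∏ i, expMeasure c (Ici (θ i ω)) := fun ω => by
    rw [Finset.mul_sum, ← Finset.sum_neg_distrib, Real.exp_sum,
      ENNReal.ofReal_prod_of_nonneg fun i _ => (Real.exp_pos _).le]
    simp_rw [hexp]
  rw [hlin (fun ω => -(c * ∑ i, θ i ω)) ((Finset.measurable_sum _ fun i _ => hθ i).const_mul c).neg]
  simp_rw [hlin (fun ω => -(c * θ _ ω)) ((hθ _).const_mul c).neg, hprod, hexp]
  calc (∫⁻ ω, ∏ i, expMeasure c (Ici (θ i ω)) ∂P).toReal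
      ≤ (ENNReal.ofReal C * ∏ i, ∫⁻ ω, expMeasure c (Ici (θ i ω)) ∂P).toReal :=
        ENNReal.toReal_mono (ENNReal.mul_ne_top ENNReal.ofReal_ne_top
          (ENNReal.prod_ne_top fun i _ => hfin i))
          (lintegral_prod_measure_Ici_le P _ hθ hlow')
    _ = C * ∏ i, (∫⁻ ω, expMeasure c (Ici (θ i ω)) ∂P).toReal := by
        rw [ENNReal.toReal_mul, ENNReal.toReal_ofReal hC, ENNReal.toReal_prod]

theorem integral_exp_neg_mul_sum_range_le {θ : ℕ → Ω → ℝ} (hθ : ∀ i, Measurable (θ i))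
    (hθ0 : ∀ i ω, 0 ≤ θ i ω) (hid : ∀ i, P.map (θ i) = P.map (θ 0)) {n : ℕ} {C : ℝ}
    (hC : 0 ≤ C) (hlow : ∀ x : Fin n → ℝ,
      (P {ω | ∀ i : Fin n, θ i.1 ω ≤ x i}).toReal ≤ C * ∏ i : Fin n, (P {ω | θ i.1 ω ≤ x i}).toReal)
    {c : ℝ} (hc : 0 < c) :
    ∫ ω, Real.exp (-(c * ∑ j ∈ Finset.range n, θ j ω)) ∂P ≤
      C * (∫ ω, Real.exp (-(c * θ 0 ω)) ∂P) ^ n := by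
  have hexp : Continuous fun t => Real.exp (-(c * t)) := by fun_prop
  have hsame : ∀ i, ∫ ω, Real.exp (-(c * θ i ω)) ∂P = ∫ ω, Real.exp (-(c * θ 0 ω)) ∂P :=
    fun i => by
      rw [← integral_map (hθ i).aemeasurable hexp.aestronglyMeasurable, hid i,
        integral_map (hθ 0).aemeasurable hexp.aestronglyMeasurable]
  have hrange : ∀ ω, ∑ j ∈ Finset.range n, θ j ω = ∑ i : Fin n, θ i ω := fun ω =>
    (Fin.sum_univ_eq_sum_range (θ · ω) n).symm
  simpa [hrange, hsame] using
    integral_exp_neg_mul_sum_le (θ := fun i : Fin n => θ i) (fun i => hθ i) (fun i => hθ0 i)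
      hC hlow hc

theorem summable_integral_exp_neg_mul_sum_rpow {θ : ℕ → Ω → ℝ} (hθ : ∀ i, Measurable (θ i))
    (hθ0 : ∀ i ω, 0 ≤ θ i ω) (hid : ∀ i, P.map (θ i) = P.map (θ 0)) {gL : ℕ → ℝ}
    (hgL : ∀ n, 0 ≤ gL n)
    (hlow : ∀ n : ℕ, ∀ x : Fin n → ℝ,
      (P {ω | ∀ i : Fin n, θ i.1 ω ≤ x i}).toReal ≤
        gL n * ∏ i : Fin n, (P {ω | θ i.1 ω ≤ x i}).toReal)
    {c δ : ℝ} (hc : 0 < c) (hlap : ∫ ω, Real.exp (-(c * θ 0 ω)) ∂P < Real.exp (-δ))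
    (hglim : IsBoundedUnder (· ≤ ·) atTop fun n : ℕ => gL n * Real.exp (-(δ * n)))
    {p : ℝ} (hp : 0 < p) :
    Summable fun i : ℕ => (∫ ω, Real.exp (-(c * ∑ j ∈ Finset.range (i + 1), θ j ω)) ∂P) ^ p := by
  set a := ∫ ω, Real.exp (-(c * θ 0 ω)) ∂P
  obtain ⟨K, hK⟩ := hglim.bddAbove_range
  have hK' : ∀ n : ℕ, gL n ≤ K * Real.exp (δ * n) := fun n => by
    rw [← div_le_iff₀ (Real.exp_pos _), div_eq_mul_inv, ← Real.exp_neg]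
    exact hK ⟨n, rfl⟩
  have hK0 : 0 ≤ K := (mul_nonneg (hgL 0) (Real.exp_pos _).le).trans (hK ⟨0, rfl⟩)
  have ha0 : 0 ≤ a := integral_nonneg fun ω => (Real.exp_pos _).le
  set ρ := Real.exp δ * a
  have hρ0 : 0 ≤ ρ := by positivity
  have hρ1 : ρ < 1 := by
    calc ρ < Real.exp δ * Real.exp (-δ) := mul_lt_mul_of_pos_left hlap (Real.exp_pos _)
      _ = 1 := by rw [← Real.exp_add, add_neg_cancel, Real.exp_zero]
  have hbound : ∀ n : ℕ, ∫ ω, Real.exp (-(c * ∑ j ∈ Finset.range n, θ j ω)) ∂P ≤ K * ρ ^ n :=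
    fun n => calc
      _ ≤ gL n * a ^ n := integral_exp_neg_mul_sum_range_le hθ hθ0 hid (hgL n) (hlow n) hc
      _ ≤ K * Real.exp (δ * n) * a ^ n := by gcongr; exact hK' n
      _ = K * ρ ^ n := by rw [mul_pow, mul_comm δ, Real.exp_nat_mul, mul_assoc]
  have hgeom : Summable fun n : ℕ => (K * ρ ^ n) ^ p := by
    simp_rw [Real.mul_rpow hK0 (pow_nonneg hρ0 _), ← Real.rpow_natCast, ← Real.rpow_mul hρ0,
      mul_comm _ p, Real.rpow_mul hρ0, Real.rpow_natCast]
    exact (summable_geometric_of_lt_one (Real.rpow_nonneg hρ0 _)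
      (Real.rpow_lt_one hρ0 hρ1 hp)).mul_left _
  have hE0 : ∀ n : ℕ, 0 ≤ ∫ ω, Real.exp (-(c * ∑ j ∈ Finset.range n, θ j ω)) ∂P :=
    fun n => integral_nonneg fun ω => (Real.exp_pos _).le
  exact ((summable_nat_add_iff 1).2 hgeom).of_nonneg_of_le
    (fun i => Real.rpow_nonneg (hE0 _) _)
    fun i => Real.rpow_le_rpow (hE0 _) (hbound (i + 1)) hp.le

end ExpMoments

theorem tailA_antitone {d : ℕ} (A : Set (Fin d → ℝ)) (F : Measure (Fin d → ℝ))
    [IsFiniteMeasure F] : Antitone (tailA A F) := fun _ _ hxy =>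
  ENNReal.toReal_mono (measure_ne_top F _) (measure_mono fun _ hz => lt_of_le_of_lt hxy hz)

theorem statement10_general
    {Ω : Type*} [MeasurableSpace Ω] (P : Measure Ω) [IsProbabilityMeasure P]
    {d : ℕ} {A : Set (Fin d → ℝ)}
    {r : ℝ} (hr : 0 < r)
    (F : Measure (Fin d → ℝ)) [IsProbabilityMeasure F]
    (hFpos : ∀ x : ℝ, 0 < tailA A F x)
    (hFC : ClassC (tailA A F))
    (θ : ℕ → Ω → ℝ) (hθmeas : ∀ i, Measurable (θ i))
    (hθnn : ∀ i ω, 0 ≤ θ i ω)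
    (hθid : ∀ i, P.map (θ i) = P.map (θ 0))
    (gL : ℕ → ℝ) (hgL : ∀ n, 0 < gL n)
    (hWLOD : ∀ n : ℕ, ∀ x : Fin n → ℝ,
      (P {ω | ∀ i : Fin n, θ i.1 ω ≤ x i}).toReal ≤
        gL n * ∏ i : Fin n, (P {ω | θ i.1 ω ≤ x i}).toReal)
    {δ : ℝ} (hδ0 : 0 < δ)
    (hδ : δ < -Real.log (∫ ω, Real.exp (-(r * Jminus (tailA A F) * θ 0 ω)) ∂P))
    (hglim : IsBoundedUnder (· ≤ ·) atTop (fun n : ℕ => gL n * Real.exp (-(δ * n)))) :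
    ∃ q₁ q₂ : ℝ, 0 < q₁ ∧ q₁ < Jminus (tailA A F) ∧
      Jminus (tailA A F) ≤ Jplus (tailA A F) ∧ Jplus (tailA A F) < q₂ ∧
      Summable (fun i : ℕ =>
        (max (∫ ω, Real.exp (-(q₁ * (r * ∑ j ∈ Finset.range (i + 1), θ j ω))) ∂P)
            (∫ ω, Real.exp (-(q₂ * (r * ∑ j ∈ Finset.range (i + 1), θ j ω))) ∂P)) ^
          ((1 : ℝ) / (if Jplus (tailA A F) < 1 then 1 else q₂))) := by
  have hX0 : ∀ ω, 0 ≤ r * θ 0 ω := fun ω => mul_nonneg hr.le (hθnn 0 ω)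
  simp_rw [mul_comm r, mul_assoc] at hδ
  obtain ⟨q₁, hq₁, hq₁J, hlap⟩ :=
    exists_lt_integral_exp_neg_mul_lt ((hθmeas 0).const_mul r) hX0 hδ0 hδ
  set q₂ := max (Jplus (tailA A F)) q₁ + 1
  have hq₁₂ : q₁ ≤ q₂ := by linarith [le_max_right (Jplus (tailA A F)) q₁]
  refine ⟨q₁, q₂, hq₁, hq₁J, Jminus_le_Jplus hFpos (tailA_antitone A F) hFC,
    by linarith [le_max_left (Jplus (tailA A F)) q₁], ?_⟩
  have hmax : ∀ i : ℕ,
      max (∫ ω, Real.exp (-(q₁ * (r * ∑ j ∈ Finset.range (i + 1), θ j ω))) ∂P)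
        (∫ ω, Real.exp (-(q₂ * (r * ∑ j ∈ Finset.range (i + 1), θ j ω))) ∂P) =
      ∫ ω, Real.exp (-(q₁ * r * ∑ j ∈ Finset.range (i + 1), θ j ω)) ∂P := fun i => by
    rw [max_eq_left (integral_exp_neg_mul_le_of_le
      ((Finset.measurable_sum _ fun j _ => hθmeas j).const_mul r)
      (fun ω => mul_nonneg hr.le (Finset.sum_nonneg fun j _ => hθnn j ω)) hq₁.le hq₁₂)]
    simp_rw [mul_assoc]
  simp_rw [hmax]
  refine summable_integral_exp_neg_mul_sum_rpow hθmeas hθnn hθid (fun n => (hgL n).le) hWLOD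
    (mul_pos hq₁ hr) (by simpa only [mul_assoc] using hlap) hglim ?_
  split_ifs <;> exact one_div_pos.2 (by linarith)

/-- Example 3.1: identically distributed, widely lower orthant dependent (WLOD)
inter-arrival times with `limsup g_L(n) e^{−δn} < ∞` for some
`δ ∈ (0, −log E[e^{−r J⁻_{F_A} θ₁}])` satisfy Assumption 3.1. -/
theorem statement10
    {Ω : Type*} [MeasurableSpace Ω] (P : Measure Ω) [IsProbabilityMeasure P]
    {d : ℕ} (hd : 1 ≤ d) {A : Set (Fin d → ℝ)} (hA : InRfam d A)
    {r : ℝ} (hr : 0 < r)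
    (F : Measure (Fin d → ℝ)) [IsProbabilityMeasure F]
    (hFpos : ∀ x : ℝ, 0 < tailA A F x)
    (hFC : ClassC (tailA A F)) (hFPD : ClassPD (tailA A F))
    (θ : ℕ → Ω → ℝ) (hθmeas : ∀ i, Measurable (θ i))
    (hθnn : ∀ i ω, 0 ≤ θ i ω)
    (hθid : ∀ i, P.map (θ i) = P.map (θ 0))
    (hθ0 : 0 < P {ω | 0 < θ 0 ω})
    (gL : ℕ → ℝ) (hgL : ∀ n, 0 < gL n)
    (hWLOD : ∀ n : ℕ, ∀ x : Fin n → ℝ,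
      (P {ω | ∀ i : Fin n, θ i.1 ω ≤ x i}).toReal ≤
        gL n * ∏ i : Fin n, (P {ω | θ i.1 ω ≤ x i}).toReal)
    {δ : ℝ} (hδ0 : 0 < δ)
    (hδ : δ < -Real.log (∫ ω, Real.exp (-(r * Jminus (tailA A F) * θ 0 ω)) ∂P))
    (hglim : IsBoundedUnder (· ≤ ·) atTop (fun n : ℕ => gL n * Real.exp (-(δ * n)))) :
    ∃ q₁ q₂ : ℝ, 0 < q₁ ∧ q₁ < Jminus (tailA A F) ∧
      Jminus (tailA A F) ≤ Jplus (tailA A F) ∧ Jplus (tailA A F) < q₂ ∧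
      Summable (fun i : ℕ =>
        (max (∫ ω, Real.exp (-(q₁ * (r * ∑ j ∈ Finset.range (i + 1), θ j ω))) ∂P)
            (∫ ω, Real.exp (-(q₂ * (r * ∑ j ∈ Finset.range (i + 1), θ j ω))) ∂P)) ^
          ((1 : ℝ) / (if Jplus (tailA A F) < 1 then 1 else q₂))) :=
  statement10_general P hr F hFpos hFC θ hθmeas hθnn hθid gL hgL hWLOD hδ0 hδ hglim
end
end

section
/- Fix d ≥ 1, A ∈ 𝓡, r ≥ 0, and T ∈ (0,∞) with m(T) > 0. Suppose Assumption 1.1 holds, Assumption 3.2 holds at T with constant C, and the claim vectors {X^(i), i ≥ 1} are RD_A with RD constants x₀ > 0 and K > 0. Define J_x(T) := Σ_{i≥1} 1{X^(i) e^{−r τ_i} ∈ x·A, τ_i ≤ T} and Λ_x := E[J_x(T)] = ∫_{[0,T]} P(X e^{−r s} ∈ x·A) ν(ds). Then there exists x₁ > 0 such that for every x ≥ x₁: E[ J_x(T) (J_x(T) − 1) ] ≤ C · K · Λ_x². -/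
/-!
Since `J(J - 1) ≤ ∑_{i ≠ j} 1_{E_i} 1_{E_j}` for the events `E_i = {τ_i ≤ T, e^{-rτ_i} X^(i) ∈ x A}`,
it suffices to bound `P(E_i ∩ E_j)`. Conditioning on the arrival times, which are independent of
the claims, `E_i` at time `s` is the event `X^(i)_A > x e^{rs}` at a level above `x₀`, so regression
dependence bounds `P(E_i ∩ E_j)` by `K E[g(τ_i) g(τ_j)]` with `g(s) = 1_{[0,T]}(s) P(e^{-rs} X ∈ x A)`.
Summed over `i ≠ j` this is `K ∫ g ⊗ g dα⁽²⁾`, and Assumption 3.2 bounds it by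
`C K ∫ g ⊗ g d(ν × ν) = C K Λ_x²`.
-/

open MeasureTheory ProbabilityTheory Filter Topology Set
open scoped Pointwise ENNReal NNReal

noncomputable section

namespace InRfam

variable {d : ℕ} {A : Set (Fin d → ℝ)}

lemma smul_mem_of_le (hA : InRfam d A) {z : Fin d → ℝ} (hz : ∀ k, 0 ≤ z k) {u v : ℝ}
    (hu : 0 < u) (huv : u ≤ v) (hzv : z ∈ v • A) : z ∈ u • A := by
  have hv : 0 < v := hu.trans_le huv
  rw [mem_smul_set_iff_inv_smul_mem₀ hv.ne'] at hzv
  rw [mem_smul_set_iff_inv_smul_mem₀ hu.ne', show u⁻¹ • z = v⁻¹ • z + (u⁻¹ - v⁻¹) • z by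
    rw [← add_smul, add_sub_cancel]]
  exact hA.2.1 _ hzv _ fun k => mul_nonneg (sub_nonneg.2 (inv_anti₀ hu huv)) (hz k)

lemma bddAbove_setOf_mem_smul (hA : InRfam d A) (z : Fin d → ℝ) :
    BddAbove {u : ℝ | 0 < u ∧ z ∈ u • A} := by
  obtain ⟨ε, hε, hball⟩ : ∃ ε > 0, ∀ w ∈ A, ε ≤ dist 0 w := by
    simpa [Metric.mem_closure_iff] using hA.2.2.2
  refine ⟨‖z‖ / ε, fun u ⟨hu, hzu⟩ => ?_⟩
  rw [mem_smul_set_iff_inv_smul_mem₀ hu.ne'] at hzu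
  have := hball _ hzu
  rw [dist_zero_left, norm_smul, norm_inv, Real.norm_eq_abs, abs_of_pos hu] at this
  rw [le_div_iff₀ hε]
  calc u * ε ≤ u * (u⁻¹ * ‖z‖) := mul_le_mul_of_nonneg_left this hu.le
    _ = ‖z‖ := by field_simp

lemma mem_smul_iff_lt_projA (hA : InRfam d A) {z : Fin d → ℝ} (hz : ∀ k, 0 ≤ z k) {u : ℝ}
    (hu : 0 < u) : z ∈ u • A ↔ u < projA A z := by
  constructor
  · intro hzu
    -- `A` is open, so `z` stays in `v • A` for `v` slightly above `u`
    have hnhds : ∀ᶠ v in 𝓝 u, v⁻¹ • z ∈ A :=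
      ((continuousAt_inv₀ hu.ne').smul continuousAt_const).eventually_mem
        (hA.1.mem_nhds ((mem_smul_set_iff_inv_smul_mem₀ hu.ne' _ _).1 hzu))
    have hright : ∀ᶠ v in 𝓝[>] u, v⁻¹ • z ∈ A ∧ u < v :=
      (eventually_nhdsWithin_of_eventually_nhds hnhds).and self_mem_nhdsWithin
    obtain ⟨v, hvA, huv⟩ := hright.exists
    have hv : 0 < v := hu.trans huv
    exact huv.trans_le <| le_csSup (hA.bddAbove_setOf_mem_smul z)
      ⟨hv, (mem_smul_set_iff_inv_smul_mem₀ hv.ne' _ _).2 hvA⟩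
  · intro hlt
    have hne : {v : ℝ | 0 < v ∧ z ∈ v • A}.Nonempty := by
      by_contra hemp
      rw [not_nonempty_iff_eq_empty] at hemp
      rw [projA, hemp, Real.sSup_empty] at hlt
      exact hu.not_gt hlt
    obtain ⟨v, ⟨-, hzv⟩, huv⟩ := exists_lt_of_lt_csSup hne hlt
    exact hA.smul_mem_of_le hz hu huv.le hzv

lemma smul_mem_smul_iff_lt_projA (hA : InRfam d A) {z : Fin d → ℝ} (hz : ∀ k, 0 ≤ z k)
    {a x : ℝ} (ha : 0 < a) (hx : 0 < x) : a • z ∈ x • A ↔ a⁻¹ * x < projA A z := by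
  rw [show x • A = a • (a⁻¹ * x) • A by rw [smul_smul, mul_inv_cancel_left₀ ha.ne'],
    smul_mem_smul_set_iff₀ ha.ne']
  exact hA.mem_smul_iff_lt_projA hz (by positivity)

end InRfam

lemma RDwith.measure_inter_le {Ω ι : Type*} [MeasurableSpace Ω] {P : Measure Ω}
    [IsFiniteMeasure P] {x₀ K : ℝ} {Z : ι → Ω → ℝ} (hRD : RDwith P x₀ K Z) (hK : 0 ≤ K)
    {i j : ι} (hij : i ≠ j) {a b : ℝ} (ha : x₀ < a) (hb : x₀ < b) :
    P {ω | a < Z i ω ∧ b < Z j ω} ≤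
      ENNReal.ofReal K * P {ω | a < Z i ω} * P {ω | b < Z j ω} := by
  classical
  have hrd := hRD i {j} (Finset.singleton_nonempty j) (by simpa using hij) a ha
    {v | b < v ⟨j, Finset.mem_singleton_self j⟩}
    (measurableSet_lt measurable_const (measurable_pi_apply _))
    (by rintro v hv ⟨j', hj'⟩; obtain rfl := Finset.mem_singleton.1 hj'; exact hb.trans hv)
  calc P {ω | a < Z i ω ∧ b < Z j ω}
      = ENNReal.ofReal (P {ω | a < Z i ω ∧ b < Z j ω}).toReal :=
        (ENNReal.ofReal_toReal (measure_ne_top P _)).symm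
    _ ≤ ENNReal.ofReal (K * (P {ω | a < Z i ω}).toReal * (P {ω | b < Z j ω}).toReal) :=
        ENNReal.ofReal_le_ofReal hrd
    _ = ENNReal.ofReal K * P {ω | a < Z i ω} * P {ω | b < Z j ω} := by
        rw [ENNReal.ofReal_mul (by positivity), ENNReal.ofReal_mul hK,
          ENNReal.ofReal_toReal (measure_ne_top P _), ENNReal.ofReal_toReal (measure_ne_top P _)]

lemma RDwith.measure_smul_mem_inter_le {Ω ι : Type*} [MeasurableSpace Ω] {P : Measure Ω}
    [IsFiniteMeasure P] {d : ℕ} {A : Set (Fin d → ℝ)} (hA : InRfam d A)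
    {X : ι → Ω → Fin d → ℝ} (hXmeas : ∀ i, Measurable (X i)) (hXnn : ∀ i ω k, 0 ≤ X i ω k)
    {F : Measure (Fin d → ℝ)} (hXdist : ∀ i, P.map (X i) = F) {x₀ K : ℝ} (hx₀ : 0 < x₀)
    (hK : 0 ≤ K) (hRD : RDwith P x₀ K fun i ω => projA A (X i ω)) {x : ℝ} (hx : x₀ < x)
    {a b : ℝ} (ha : a ∈ Ioc 0 1) (hb : b ∈ Ioc 0 1) {i j : ι} (hij : i ≠ j) :
    P {ω | a • X i ω ∈ x • A ∧ b • X j ω ∈ x • A} ≤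
      ENNReal.ofReal K * F {z | a • z ∈ x • A} * F {z | b • z ∈ x • A} := by
  have hxpos : 0 < x := hx₀.trans hx
  have hmem {c : ℝ} (hc : c ∈ Ioc 0 1) (k : ι) (ω : Ω) :
      c • X k ω ∈ x • A ↔ c⁻¹ * x < projA A (X k ω) :=
    hA.smul_mem_smul_iff_lt_projA (hXnn k ω) hc.1 hxpos
  have hlevel {c : ℝ} (hc : c ∈ Ioc 0 1) : x₀ < c⁻¹ * x :=
    hx.trans_le (le_mul_of_one_le_left hxpos.le ((one_le_inv₀ hc.1).2 hc.2))
  have hlaw {c : ℝ} (hc : c ∈ Ioc 0 1) (k : ι) :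
      P {ω | c • X k ω ∈ x • A} = F {z | c • z ∈ x • A} := by
    rw [← hXdist k, Measure.map_apply (hXmeas k) (show MeasurableSet {z | c • z ∈ x • A} from
      (hA.1.smul₀ hxpos.ne').measurableSet.preimage (measurable_const_smul c))]
    rfl
  calc P {ω | a • X i ω ∈ x • A ∧ b • X j ω ∈ x • A}
      = P {ω | a⁻¹ * x < projA A (X i ω) ∧ b⁻¹ * x < projA A (X j ω)} := by
        simp only [hmem ha, hmem hb]
    _ ≤ ENNReal.ofReal K * P {ω | a⁻¹ * x < projA A (X i ω)} *
          P {ω | b⁻¹ * x < projA A (X j ω)} :=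
        hRD.measure_inter_le hK hij (hlevel ha) (hlevel hb)
    _ = ENNReal.ofReal K * F {z | a • z ∈ x • A} * F {z | b • z ∈ x • A} := by
        simp only [← hmem ha, ← hmem hb, hlaw ha, hlaw hb]

lemma tsum_mul_tsum_sub_one_le {ι : Type*} {c : ι → ℝ≥0∞} (hc : ∀ i, c i ≤ 1) :
    (∑' i, c i) * ((∑' i, c i) - 1) ≤
      ∑' p : {p : ι × ι // p.1 ≠ p.2}, c p.1.1 * c p.1.2 := by
  classical
  have hrow (i : ι) : ∑' j, {p : ι × ι | p.1 ≠ p.2}.indicator (fun p => c p.1 * c p.2) (i, j) =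
      c i * ((∑' j, c j) - c i) := by
    rw [ENNReal.tsum_eq_add_tsum_ite (f := c) i,
      ENNReal.add_sub_cancel_left ((hc i).trans_lt ENNReal.one_lt_top).ne,
      ← ENNReal.tsum_mul_left]
    refine tsum_congr fun j => ?_
    by_cases hji : j = i
    · simp [hji]
    · simp [indicator_of_mem (show (i, j) ∈ {p : ι × ι | p.1 ≠ p.2} from Ne.symm hji), hji]
  calc (∑' i, c i) * ((∑' i, c i) - 1) = ∑' i, c i * ((∑' j, c j) - 1) :=
        ENNReal.tsum_mul_right.symm
    _ ≤ ∑' i, c i * ((∑' j, c j) - c i) :=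
        ENNReal.tsum_le_tsum fun i => by gcongr; exact hc i
    _ = ∑' p : ι × ι, {p : ι × ι | p.1 ≠ p.2}.indicator (fun p => c p.1 * c p.2) p := by
        rw [ENNReal.tsum_prod']
        exact tsum_congr fun i => (hrow i).symm
    _ = ∑' p : {p : ι × ι // p.1 ≠ p.2}, c p.1.1 * c p.1.2 := (tsum_subtype _ _).symm

lemma lintegral_count_mul_count_sub_one_le {Ω ι : Type*} [MeasurableSpace Ω] [Countable ι]
    (μ : Measure Ω) {E : ι → Set Ω} (hE : ∀ i, MeasurableSet (E i)) :
    ∫⁻ ω, (∑' i, (E i).indicator (fun _ => 1) ω) * (∑' i, (E i).indicator (fun _ => 1) ω - 1) ∂μ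
      ≤ ∑' p : {p : ι × ι // p.1 ≠ p.2}, μ (E p.1.1 ∩ E p.1.2) := by
  have hpair (i j : ι) : (fun ω => (E i).indicator (fun _ => (1 : ℝ≥0∞)) ω *
      (E j).indicator (fun _ => 1) ω) = (E i ∩ E j).indicator fun _ => 1 := by
    ext ω
    by_cases hi : ω ∈ E i <;> by_cases hj : ω ∈ E j <;> simp [hi, hj]
  calc _ ≤ ∫⁻ ω, ∑' p : {p : ι × ι // p.1 ≠ p.2},
        (E p.1.1).indicator (fun _ => 1) ω * (E p.1.2).indicator (fun _ => 1) ω ∂μ :=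
        lintegral_mono fun ω => tsum_mul_tsum_sub_one_le fun i => indicator_le_self' (by simp) ω
    _ = ∑' p : {p : ι × ι // p.1 ≠ p.2}, μ (E p.1.1 ∩ E p.1.2) := by
        rw [lintegral_tsum fun p => by
          rw [hpair]; exact (measurable_const.indicator ((hE _).inter (hE _))).aemeasurable]
        simp only [hpair]
        exact tsum_congr fun p => lintegral_indicator_one ((hE _).inter (hE _))

lemma ProbabilityTheory.IndepFun.measure_preimage_eq_lintegral {Ω β γ : Type*} [MeasurableSpace Ω]
    [MeasurableSpace β] [MeasurableSpace γ] {P : Measure Ω} [IsFiniteMeasure P] {V : Ω → γ}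
    {Y : Ω → β} (hVY : IndepFun V Y P) (hV : Measurable V) (hY : Measurable Y)
    {W : Set (γ × β)} (hW : MeasurableSet W) :
    P ((fun ω => (V ω, Y ω)) ⁻¹' W) = ∫⁻ ω, P.map Y (Prod.mk (V ω) ⁻¹' W) ∂P := by
  rw [← Measure.map_apply (hV.prodMk hY) hW,
    hVY.map_prod_eq_prod_map_map hV.aemeasurable hY.aemeasurable, Measure.prod_apply hW,
    lintegral_map (measurable_measure_prodMk_left hW) hV]

lemma mprod_eq_prod {α β : Type*} [MeasurableSpace α] [MeasurableSpace β] (μ : Measure α)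
    (ν : Measure β) : mprod μ ν = μ.prod ν := by
  rw [Measure.prod_def]
  rfl

section PointProcess

variable {Ω : Type*} [MeasurableSpace Ω] (P : Measure Ω) {τ : ℕ → Ω → ℝ}

lemma lintegral_secondFactorial (hτ : ∀ i, Measurable (τ i)) {f : ℝ × ℝ → ℝ≥0∞}
    (hf : Measurable f) :
    ∫⁻ q, f q ∂secondFactorial P τ =
      ∑' p : {p : ℕ × ℕ // p.1 ≠ p.2}, ∫⁻ ω, f (τ p.1.1 ω, τ p.1.2 ω) ∂P := by
  rw [secondFactorial, lintegral_sum_measure]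
  exact tsum_congr fun p => lintegral_map hf ((hτ _).prodMk (hτ _))

lemma lintegral_nuProd_mul [IsFiniteMeasure P] (hτ : ∀ i, Measurable (τ i)) {f g : ℝ → ℝ≥0∞}
    (hf : Measurable f) (hg : Measurable g) :
    ∫⁻ q, f q.1 * g q.2 ∂nuProd P τ =
      (∑' i, ∫⁻ ω, f (τ i ω) ∂P) * ∑' j, ∫⁻ ω, g (τ j ω) ∂P := by
  rw [nuProd, lintegral_sum_measure, ENNReal.tsum_prod', ← ENNReal.tsum_mul_right]
  refine tsum_congr fun i => ?_
  rw [← ENNReal.tsum_mul_left]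
  refine tsum_congr fun j => ?_
  rw [mprod_eq_prod, lintegral_prod_mul hf.aemeasurable hg.aemeasurable, lintegral_map hf (hτ i),
    lintegral_map hg (hτ j)]

variable {P} {T C : ℝ}

lemma Assumption32.lintegral_secondFactorial_le (h32 : Assumption32 P τ T C)
    {f : ℝ × ℝ → ℝ≥0∞} (hf : ∀ q ∉ Icc 0 T ×ˢ Icc 0 T, f q = 0) :
    ∫⁻ q, f q ∂secondFactorial P τ ≤ ENNReal.ofReal C * ∫⁻ q, f q ∂nuProd P τ := by
  have hS : MeasurableSet (Icc (0 : ℝ) T ×ˢ Icc 0 T) := measurableSet_Icc.prod measurableSet_Icc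
  have hle : (secondFactorial P τ).restrict (Icc 0 T ×ˢ Icc 0 T) ≤
      (ENNReal.ofReal C • nuProd P τ).restrict (Icc 0 T ×ˢ Icc 0 T) := by
    refine Measure.le_iff.2 fun B hB => ?_
    rw [Measure.restrict_apply hB, Measure.restrict_apply hB, Measure.smul_apply, smul_eq_mul]
    exact h32 _ (hB.inter hS) inter_subset_right
  rw [← indicator_eq_self.2 (Function.support_subset_iff'.2 hf), lintegral_indicator hS,
    lintegral_indicator hS, ← smul_eq_mul, ← lintegral_smul_measure, ← Measure.restrict_smul]
  exact lintegral_mono' hle le_rfl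

lemma Assumption32.tsum_lintegral_mul_le [IsFiniteMeasure P] (h32 : Assumption32 P τ T C)
    (hτ : ∀ i, Measurable (τ i)) {g : ℝ → ℝ≥0∞} (hg : Measurable g)
    (hg0 : ∀ s ∉ Icc 0 T, g s = 0) :
    ∑' p : {p : ℕ × ℕ // p.1 ≠ p.2}, ∫⁻ ω, g (τ p.1.1 ω) * g (τ p.1.2 ω) ∂P ≤
      ENNReal.ofReal C * (∑' i, ∫⁻ ω, g (τ i ω) ∂P) ^ 2 := by
  rw [← lintegral_secondFactorial P hτ (f := fun q => g q.1 * g q.2) (by fun_prop),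
    sq, ← lintegral_nuProd_mul P hτ hg hg]
  refine h32.lintegral_secondFactorial_le fun q hq => ?_
  rcases not_and_or.1 (mem_prod.not.1 hq) with hq | hq <;> simp [hg0 _ hq]

end PointProcess

theorem lintegral_count_mul_count_sub_one_le_of_indepFun {Ω β : Type*} [MeasurableSpace Ω]
    [MeasurableSpace β] {P : Measure Ω} [IsFiniteMeasure P] {Y : ℕ → Ω → β} {τ : ℕ → Ω → ℝ}
    (hY : ∀ i, Measurable (Y i)) (hτ : ∀ i, Measurable (τ i)) {F : Measure β}
    (hYdist : ∀ i, P.map (Y i) = F) (hτnn : ∀ i ω, 0 ≤ τ i ω)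
    (hindep : IndepFun (fun ω i => Y i ω) (fun ω i => τ i ω) P) {T C K : ℝ} (hC : 0 ≤ C)
    (h32 : Assumption32 P τ T C) {D : Set (ℝ × β)} (hD : MeasurableSet D)
    (hpair : ∀ i j, i ≠ j → ∀ s ∈ Icc 0 T, ∀ t ∈ Icc 0 T,
      P {ω | (s, Y i ω) ∈ D ∧ (t, Y j ω) ∈ D} ≤
        ENNReal.ofReal K * F (Prod.mk s ⁻¹' D) * F (Prod.mk t ⁻¹' D))
    {E : ℕ → Set Ω} (hE : ∀ i, E i = {ω | τ i ω ≤ T ∧ (τ i ω, Y i ω) ∈ D}) :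
    ∫⁻ ω, (∑' i, (E i).indicator (fun _ => 1) ω) * (∑' i, (E i).indicator (fun _ => 1) ω - 1) ∂P
      ≤ ENNReal.ofReal (C * K) * (∑' i, P (E i)) ^ 2 := by
  have : IsFiniteMeasure F := hYdist 0 ▸ inferInstance
  set g : ℝ → ℝ≥0∞ := (Icc 0 T).indicator fun s => F (Prod.mk s ⁻¹' D)
  have hg : Measurable g := (measurable_measure_prodMk_left hD).indicator measurableSet_Icc
  have hW : MeasurableSet {q : ℝ × β | q.1 ≤ T ∧ q ∈ D} :=
    (measurableSet_le measurable_fst measurable_const).inter hD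
  have hE_meas (i : ℕ) : MeasurableSet (E i) := by
    rw [hE i]
    exact hW.preimage ((hτ i).prodMk (hY i))
  have hE_prob (i : ℕ) : P (E i) = ∫⁻ ω, g (τ i ω) ∂P := by
    have hind : IndepFun (τ i) (Y i) P :=
      hindep.symm.comp (measurable_pi_apply i) (measurable_pi_apply i)
    rw [hE i, show {ω | τ i ω ≤ T ∧ (τ i ω, Y i ω) ∈ D} =
        (fun ω => (τ i ω, Y i ω)) ⁻¹' {q | q.1 ≤ T ∧ q ∈ D} from rfl,
      hind.measure_preimage_eq_lintegral (hτ i) (hY i) hW, hYdist i]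
    refine lintegral_congr fun ω => ?_
    by_cases hT : τ i ω ≤ T
    · simp [g, hT, hτnn i ω, preimage]
    · simp [g, hT]
  have hE_inter {i j : ℕ} (hij : i ≠ j) :
      P (E i ∩ E j) ≤ ENNReal.ofReal K * ∫⁻ ω, g (τ i ω) * g (τ j ω) ∂P := by
    set W : Set ((ℝ × ℝ) × (β × β)) :=
      {q | (q.1.1 ≤ T ∧ (q.1.1, q.2.1) ∈ D) ∧ (q.1.2 ≤ T ∧ (q.1.2, q.2.2) ∈ D)}
    have hWm : MeasurableSet W :=
      (hW.preimage (f := fun q : (ℝ × ℝ) × (β × β) => (q.1.1, q.2.1)) (by fun_prop)).inter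
        (hW.preimage (f := fun q : (ℝ × ℝ) × (β × β) => (q.1.2, q.2.2)) (by fun_prop))
    have hind : IndepFun (fun ω => (τ i ω, τ j ω)) (fun ω => (Y i ω, Y j ω)) P :=
      hindep.symm.comp (φ := fun b => (b i, b j)) (ψ := fun a => (a i, a j)) (by fun_prop)
        (by fun_prop)
    rw [hE i, hE j, show {ω | τ i ω ≤ T ∧ (τ i ω, Y i ω) ∈ D} ∩
        {ω | τ j ω ≤ T ∧ (τ j ω, Y j ω) ∈ D} =
        (fun ω => ((τ i ω, τ j ω), (Y i ω, Y j ω))) ⁻¹' W from rfl,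
      hind.measure_preimage_eq_lintegral (by fun_prop) (by fun_prop) hWm,
      ← lintegral_const_mul' _ _ ENNReal.ofReal_ne_top]
    refine lintegral_mono fun ω => ?_
    rw [Measure.map_apply (by fun_prop) (measurable_prodMk_left hWm)]
    by_cases hT : τ i ω ≤ T ∧ τ j ω ≤ T
    · simp only [g, indicator_of_mem (show τ i ω ∈ Icc 0 T from ⟨hτnn i ω, hT.1⟩),
        indicator_of_mem (show τ j ω ∈ Icc 0 T from ⟨hτnn j ω, hT.2⟩), ← mul_assoc]
      convert hpair i j hij _ ⟨hτnn i ω, hT.1⟩ _ ⟨hτnn j ω, hT.2⟩ using 2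
      ext ω'
      simp [W, hT.1, hT.2]
    · rw [show (fun ω' => (Y i ω', Y j ω')) ⁻¹' (Prod.mk (τ i ω, τ j ω) ⁻¹' W) = ∅ from
        eq_empty_of_forall_notMem fun ω' h => hT ⟨h.1.1, h.2.1⟩, measure_empty]
      exact zero_le
  calc _ ≤ ∑' p : {p : ℕ × ℕ // p.1 ≠ p.2}, P (E p.1.1 ∩ E p.1.2) :=
        lintegral_count_mul_count_sub_one_le P hE_meas
    _ ≤ ∑' p : {p : ℕ × ℕ // p.1 ≠ p.2},
          ENNReal.ofReal K * ∫⁻ ω, g (τ p.1.1 ω) * g (τ p.1.2 ω) ∂P :=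
        ENNReal.tsum_le_tsum fun p => hE_inter p.2
    _ ≤ ENNReal.ofReal K * (ENNReal.ofReal C * (∑' i, ∫⁻ ω, g (τ i ω) ∂P) ^ 2) := by
        rw [ENNReal.tsum_mul_left]
        gcongr
        exact h32.tsum_lintegral_mul_le hτ hg fun s hs => indicator_of_notMem hs _
    _ = ENNReal.ofReal (C * K) * (∑' i, P (E i)) ^ 2 := by
        simp only [hE_prob, ENNReal.ofReal_mul hC]
        ring

theorem statement12_general
    {Ω : Type*} [MeasurableSpace Ω] (P : Measure Ω) [IsProbabilityMeasure P]
    {d : ℕ} {A : Set (Fin d → ℝ)} (hA : InRfam d A)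
    {r : ℝ} (hr : 0 ≤ r) {T : ℝ}
    (F : Measure (Fin d → ℝ))
    (X : ℕ → Ω → Fin d → ℝ) (τ : ℕ → Ω → ℝ)
    (hXmeas : ∀ i, Measurable (X i)) (hτmeas : ∀ i, Measurable (τ i))
    (hXnn : ∀ i ω k, 0 ≤ X i ω k)
    (hXdist : ∀ i, P.map (X i) = F)
    (hτnn : ∀ i ω, 0 ≤ τ i ω)
    (hindep : IndepFun (fun ω i => X i ω) (fun ω i => τ i ω) P)
    {C : ℝ} (hC : 0 ≤ C) (h32 : Assumption32 P τ T C)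
    {x₀ K : ℝ} (hx₀ : 0 < x₀) (hK : 0 < K)
    (hRD : RDwith P x₀ K (fun i ω => projA A (X i ω))) :
    ∃ x₁ : ℝ, 0 < x₁ ∧ ∀ x : ℝ, x₁ ≤ x →
      (∫⁻ ω, Jcount r X τ A T x ω * (Jcount r X τ A T x ω - 1) ∂P) ≤
        ENNReal.ofReal (C * K) *
          (∑' i : ℕ, P {ω | τ i ω ≤ T ∧ Real.exp (-(r * τ i ω)) • X i ω ∈ x • A}) ^ 2 := by
  refine ⟨x₀ + 1, by linarith, fun x hx => ?_⟩
  have hD : MeasurableSet {q : ℝ × (Fin d → ℝ) | Real.exp (-(r * q.1)) • q.2 ∈ x • A} :=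
    (hA.1.smul₀ (by linarith : x ≠ 0)).measurableSet.preimage (by fun_prop)
  have hdiscount {s : ℝ} (hs : s ∈ Icc 0 T) : Real.exp (-(r * s)) ∈ Ioc 0 1 :=
    ⟨Real.exp_pos _, Real.exp_le_one_iff.2 (neg_nonpos.2 (mul_nonneg hr hs.1))⟩
  exact lintegral_count_mul_count_sub_one_le_of_indepFun hXmeas hτmeas hXdist hτnn hindep hC
    h32 hD (fun i j hij s hs t ht => hRD.measure_smul_mem_inter_le hA hXmeas hXnn hXdist hx₀
      hK.le (by linarith) (hdiscount hs) (hdiscount ht) hij) fun _ => rfl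

/-- Relation (3.5-15) in the proof of Theorem 3.1: for all large `x`,
`E[J_x(T)(J_x(T) − 1)] ≤ C K Λ_x²`, where `Λ_x = E[J_x(T)]`. -/
theorem statement12
    {Ω : Type*} [MeasurableSpace Ω] (P : Measure Ω) [IsProbabilityMeasure P]
    {d : ℕ} (hd : 1 ≤ d) {A : Set (Fin d → ℝ)} (hA : InRfam d A)
    {r : ℝ} (hr : 0 ≤ r) {T : ℝ} (hT : 0 < T)
    (F : Measure (Fin d → ℝ)) [IsProbabilityMeasure F]
    (X : ℕ → Ω → Fin d → ℝ) (τ : ℕ → Ω → ℝ)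
    (hXmeas : ∀ i, Measurable (X i)) (hτmeas : ∀ i, Measurable (τ i))
    (hXnn : ∀ i ω k, 0 ≤ X i ω k)
    (hXdist : ∀ i, P.map (X i) = F)
    (hτnn : ∀ i ω, 0 ≤ τ i ω) (hτmono : ∀ i ω, τ i ω ≤ τ (i + 1) ω)
    (hindep : IndepFun (fun ω i => X i ω) (fun ω i => τ i ω) P)
    (hmfin : ∀ t : ℝ, (∑' i : ℕ, P {ω | τ i ω ≤ t}) ≠ ⊤)
    (hmT : 0 < ∑' i : ℕ, P {ω | τ i ω ≤ T})
    {C : ℝ} (hC : 0 ≤ C) (h32 : Assumption32 P τ T C)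
    {x₀ K : ℝ} (hx₀ : 0 < x₀) (hK : 0 < K)
    (hRD : RDwith P x₀ K (fun i ω => projA A (X i ω))) :
    ∃ x₁ : ℝ, 0 < x₁ ∧ ∀ x : ℝ, x₁ ≤ x →
      (∫⁻ ω, Jcount r X τ A T x ω * (Jcount r X τ A T x ω - 1) ∂P) ≤
        ENNReal.ofReal (C * K) *
          (∑' i : ℕ, P {ω | τ i ω ≤ T ∧ Real.exp (-(r * τ i ω)) • X i ω ∈ x • A}) ^ 2 :=
  statement12_general P hA hr F X τ hXmeas hτmeas hXnn hXdist hτnn hindep hC h32 hx₀ hK hRD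
end
end
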